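/- arXiv:2605.11024 — 10 statements merged into one kernel-verified Lean document; each statement's English description precedes it below -/
import Mathlib

section
/- Let M = A ⊕ C be a block-diagonal positive definite Hermitian matrix (A of size d_P×d_P, C of size d_Q×d_Q) and let Y = [[0, B],[B*, 0]] be the off-diagonal Hermitian matrix built from a d_P×d_Q complex matrix B, and assume M + Y and M − Y are positive semidefinite. Then for every t ∈ [0,1), H_{M+tY}(Y,Y) = H_{M−tY}(Y,Y). -/
open Matrix MeasureTheory
open scoped ComplexOrder

noncomputable section

/-- BKM quadratic form `H_N(Y,Y) = ∫₀^∞ Tr[Y (N+rI)⁻¹ Y (N+rI)⁻¹] dr`. -/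
def bkmH {m : Type*} [Fintype m] [DecidableEq m] (N Y : Matrix m m ℂ) : ℝ :=
  ∫ r in Set.Ioi (0 : ℝ),
    ((Y * (N + r • 1)⁻¹ * Y * (N + r • 1)⁻¹).trace).re

set_option maxHeartbeats 400000 in
/-- Midpoint symmetry of the BKM form: for block-diagonal positive definite
`M = A ⊕ C` and off-diagonal `Y = [[0,B],[B*,0]]` with `M ± Y ⪰ 0`,
`H_{M+tY}(Y,Y) = H_{M−tY}(Y,Y)` for all `t ∈ [0,1)`. -/
theorem bkm_midpoint_symmetry {dP dQ : ℕ} (hdP : 1 ≤ dP) (hdQ : 1 ≤ dQ)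
    (A : Matrix (Fin dP) (Fin dP) ℂ) (C : Matrix (Fin dQ) (Fin dQ) ℂ)
    (B : Matrix (Fin dP) (Fin dQ) ℂ)
    (hA : A.PosDef) (hC : C.PosDef)
    (M : Matrix (Fin dP ⊕ Fin dQ) (Fin dP ⊕ Fin dQ) ℂ)
    (Y : Matrix (Fin dP ⊕ Fin dQ) (Fin dP ⊕ Fin dQ) ℂ)
    (hM : M = fromBlocks A 0 0 C) (hY : Y = fromBlocks 0 B Bᴴ 0)
    (hplus : (M + Y).PosSemidef) (hminus : (M - Y).PosSemidef)
    (t : ℝ) (ht0 : 0 ≤ t) (ht1 : t < 1) :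
    bkmH (M + t • Y) Y = bkmH (M - t • Y) Y := by
  set S : Matrix (Fin dP ⊕ Fin dQ) (Fin dP ⊕ Fin dQ) ℂ :=
    fromBlocks 1 0 0 (-1) with hS
  have hS2 : S * S = 1 := by
    simp [hS, fromBlocks_multiply, ← fromBlocks_one]
  have hSinv : S⁻¹ = S := Matrix.inv_eq_right_inv hS2
  have hSMS : S * M * S = M := by
    subst hM; simp [hS, fromBlocks_multiply]
  have hSYS : S * Y * S = -Y := by
    subst hY
    simp [hS, fromBlocks_multiply, fromBlocks_neg]
  have hYS : Y * S = -(S * Y) := by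
    have : S * (S * Y * S) = S * (-Y) := by rw [hSYS]
    rw [← mul_assoc, ← mul_assoc, hS2, one_mul, mul_neg] at this
    exact this
  have hconj : ∀ r : ℝ, S * (M + t • Y + r • 1) * S = M - t • Y + r • 1 := by
    intro r
    have h1 : S * (t • Y) * S = -(t • Y) := by
      rw [Matrix.mul_smul, Matrix.smul_mul, hSYS, smul_neg]
    have h2 : S * ((r : ℝ) • (1 : Matrix (Fin dP ⊕ Fin dQ) (Fin dP ⊕ Fin dQ) ℂ)) * S
        = r • 1 := by
      rw [Matrix.mul_smul, Matrix.smul_mul, mul_one, hS2]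
    calc S * (M + t • Y + r • 1) * S
        = S * M * S + S * (t • Y) * S + S * (r • 1) * S := by
          simp [Matrix.mul_add, Matrix.add_mul]
      _ = M - t • Y + r • 1 := by rw [hSMS, h1, h2, sub_eq_add_neg]
  have hinv : ∀ r : ℝ, (M - t • Y + r • 1)⁻¹ = S * (M + t • Y + r • 1)⁻¹ * S := by
    intro r
    rw [← hconj r, Matrix.mul_inv_rev, Matrix.mul_inv_rev, hSinv, mul_assoc]
  have hfun : ∀ r : ℝ,
      ((Y * (M - t • Y + r • 1)⁻¹ * Y * (M - t • Y + r • 1)⁻¹).trace).re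
        = ((Y * (M + t • Y + r • 1)⁻¹ * Y * (M + t • Y + r • 1)⁻¹).trace).re := by
    intro r
    set X := (M + t • Y + r • 1)⁻¹ with hX
    rw [hinv r]
    have hYZ : Y * (S * X * S) = -(S * (Y * X) * S) := by
      calc Y * (S * X * S) = (Y * S) * X * S := by noncomm_ring
        _ = (-(S * Y)) * X * S := by rw [hYS]
        _ = -(S * (Y * X) * S) := by noncomm_ring
    have hprod : Y * (S * X * S) * Y * (S * X * S)
        = S * ((Y * X) * (Y * X)) * S := by
      calc Y * (S * X * S) * Y * (S * X * S)
          = (Y * (S * X * S)) * (Y * (S * X * S)) := by rw [mul_assoc]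
        _ = (-(S * (Y * X) * S)) * (-(S * (Y * X) * S)) := by rw [hYZ]
        _ = S * (Y * X) * ((S * S) * ((Y * X) * S)) := by noncomm_ring
        _ = S * ((Y * X) * (Y * X)) * S := by rw [hS2]; noncomm_ring
    rw [hprod]
    have : (S * ((Y * X) * (Y * X)) * S).trace = ((Y * X) * (Y * X)).trace := by
      rw [Matrix.trace_mul_cycle, ← mul_assoc, hS2, one_mul]
    rw [this, ← mul_assoc]
  have hfe : (fun r : ℝ =>
      ((Y * (M + t • Y + r • 1)⁻¹ * Y * (M + t • Y + r • 1)⁻¹).trace).re)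
      = (fun r : ℝ =>
      ((Y * (M - t • Y + r • 1)⁻¹ * Y * (M - t • Y + r • 1)⁻¹).trace).re) := by
    funext r
    exact (hfun r).symm
  unfold bkmH
  rw [hfe]
end
end

section
/- Let M = A ⊕ C be a block-diagonal positive definite Hermitian matrix (A of size d_P×d_P, C of size d_Q×d_Q) and let Y = [[0, B],[B*, 0]] be the off-diagonal Hermitian matrix built from a d_P×d_Q complex matrix B, and assume M + Y and M − Y are positive semidefinite. Then for every t ∈ [0,1), H_{M+tY}(Y,Y) ≥ H_M(Y,Y). -/
/-!
Fix `r > 0` and put `R = M + r • 1`, `X = (R + t • Y)⁻¹`, `X' = (R - t • Y)⁻¹`. The involution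
`J = 1 ⊕ (-1)` commutes with `R` and anticommutes with `Y`, so `X' = J X J` and
`Tr[Y X Y X] = Tr[Y X' Y X']`. Writing `X = K - V`, `X' = K + V` with `K = X R X' = (X + X') / 2`
and `V = t • X Y X'`, the parallelogram law gives `Tr[Y X Y X] = Tr[Y K Y K] + Tr[Y V Y V]`, and
the last term is `t² Tr[(Y X Y) X' (Y X Y) X'] ≥ 0`. Since `K⁻¹ = R - t² Y R⁻¹ Y ≤ R`, operator
monotonicity of the inverse gives `R⁻¹ ≤ K`, hence `Tr[Y R⁻¹ Y R⁻¹] ≤ Tr[Y K Y K]`. This compares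
the integrands pointwise; both are integrable because `M` and `M + t • Y` are positive definite.
-/

open Matrix MeasureTheory
open scoped ComplexOrder

noncomputable section

open scoped MatrixOrder

namespace Matrix

variable {n : Type*}

section RCLike

variable {𝕜 : Type*} [RCLike 𝕜] {A B C P K R Y Z : Matrix n n 𝕜}

lemma PosDef.of_add_of_sub (hp : (R + Z).PosDef) (hm : (R - Z).PosSemidef) : R.PosDef := by
  simpa [← two_smul ℝ R, smul_smul] using
    (hp.add_posSemidef hm).smul (show (0 : ℝ) < 2⁻¹ by norm_num)

lemma IsHermitian.of_add_of_sub (hp : (R + Z).IsHermitian) (hm : (R - Z).IsHermitian) :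
    Z.IsHermitian := by
  have := (hp.sub hm).smul (IsSelfAdjoint.all (2⁻¹ : ℝ))
  rwa [show (2⁻¹ : ℝ) • (R + Z - (R - Z)) = Z by module] at this

lemma PosSemidef.add_smul_of_abs_le_one (hp : (R + Z).PosSemidef) (hm : (R - Z).PosSemidef)
    {t : ℝ} (ht : |t| ≤ 1) : (R + t • Z).PosSemidef := by
  have e : R + t • Z = ((1 + t) / 2) • (R + Z) + ((1 - t) / 2) • (R - Z) := by module
  rw [e]
  exact (hp.smul (by linarith [neg_abs_le t])).add (hm.smul (by linarith [le_abs_self t]))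

variable [Fintype n]

lemma PosSemidef.mul_mul_of_isHermitian (hP : P.PosSemidef) (hY : Y.IsHermitian) :
    (Y * P * Y).PosSemidef := by
  simpa [hY.eq] using hP.conjTranspose_mul_mul_same Y

variable [DecidableEq n]

lemma PosSemidef.trace_mul_nonneg (hA : A.PosSemidef) (hB : B.PosSemidef) :
    0 ≤ (A * B).trace := by
  have hs : CFC.sqrt B * CFC.sqrt B = B := CFC.sqrt_mul_sqrt_self B hB.nonneg
  have := (hA.mul_mul_of_isHermitian (CFC.sqrt_nonneg B).posSemidef.isHermitian).trace_nonneg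
  rwa [trace_mul_cycle, hs, trace_mul_comm] at this

lemma PosSemidef.trace_mul_le_trace_mul (hA : A.PosSemidef) (hBC : B ≤ C) :
    (A * B).trace ≤ (A * C).trace := by
  have := hA.trace_mul_nonneg hBC
  rwa [Matrix.mul_sub, trace_sub, sub_nonneg] at this

lemma PosSemidef.trace_mul_mul_mul_nonneg (hA : A.PosSemidef) (hB : B.PosSemidef) :
    0 ≤ (A * B * A * B).trace := by
  set s := CFC.sqrt B
  have hs : s * s = B := CFC.sqrt_mul_sqrt_self B hB.nonneg
  have hC := hA.mul_mul_of_isHermitian (CFC.sqrt_nonneg B).posSemidef.isHermitian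
  have h : (A * B * A * B).trace = (s * A * s * (s * A * s)).trace := by
    rw [← hs, show s * A * s * (s * A * s) = s * (A * (s * s) * A * s) by noncomm_ring,
      trace_mul_comm s]
    simp only [Matrix.mul_assoc]
  exact h ▸ hC.trace_mul_nonneg hC

lemma IsHermitian.trace_mul_mul_mul_le (hY : Y.IsHermitian) (hP : 0 ≤ P) (hPK : P ≤ K) :
    (Y * P * Y * P).trace ≤ (Y * K * Y * K).trace := by
  have hYPY := hP.posSemidef.mul_mul_of_isHermitian hY
  have hYKY := (hP.trans hPK).posSemidef.mul_mul_of_isHermitian hY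
  calc (Y * P * Y * P).trace ≤ (Y * P * Y * K).trace := hYPY.trace_mul_le_trace_mul hPK
    _ = (Y * K * Y * P).trace := by
      rw [Matrix.mul_assoc (Y * P), Matrix.mul_assoc (Y * K), trace_mul_comm]
    _ ≤ (Y * K * Y * K).trace := hYKY.trace_mul_le_trace_mul hPK

end RCLike

section CommRing

variable [Fintype n] {𝕜 : Type*} [CommRing 𝕜] {J R X Y Z : Matrix n n 𝕜}

lemma trace_mul_conj_involution (hJY : J * Y * J = -Y) (X : Matrix n n 𝕜) :
    (Y * (J * X * J) * Y * (J * X * J)).trace = (Y * X * Y * X).trace := by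
  rw [show Y * (J * X * J) * Y * (J * X * J) = Y * J * X * J * Y * J * X * J by noncomm_ring,
    trace_mul_comm, show J * (Y * J * X * J * Y * J * X) = J * Y * J * X * (J * Y * J) * X by
      noncomm_ring, hJY, neg_mul, neg_mul, mul_neg, neg_neg]

variable [DecidableEq n]

lemma inv_conj_involution (hJ : J * J = 1) (X : Matrix n n 𝕜) :
    (J * X * J)⁻¹ = J * X⁻¹ * J := by
  rw [mul_inv_rev, mul_inv_rev, inv_eq_left_inv hJ, Matrix.mul_assoc]

lemma inv_add_eq_sub (hm : IsUnit (R - Z).det) :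
    (R + Z)⁻¹ = (R + Z)⁻¹ * R * (R - Z)⁻¹ - (R + Z)⁻¹ * Z * (R - Z)⁻¹ := by
  rw [← Matrix.sub_mul, ← Matrix.mul_sub, Matrix.mul_assoc, mul_nonsing_inv _ hm, Matrix.mul_one]

lemma inv_sub_eq_add (hp : IsUnit (R + Z).det) :
    (R - Z)⁻¹ = (R + Z)⁻¹ * R * (R - Z)⁻¹ + (R + Z)⁻¹ * Z * (R - Z)⁻¹ := by
  rw [← Matrix.add_mul, ← Matrix.mul_add, nonsing_inv_mul _ hp, Matrix.one_mul]

end CommRing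

variable [Fintype n] [DecidableEq n]

lemma PosDef.inv_le_inv {A B : Matrix n n ℂ} (hA : A.PosDef) (hAB : A ≤ B) : B⁻¹ ≤ A⁻¹ := by
  open scoped Matrix.Norms.L2Operator in
  rw [nonsing_inv_eq_ringInverse, nonsing_inv_eq_ringInverse]
  exact CStarAlgebra.ringInverse_le_ringInverse hAB hA.isStrictlyPositive

lemma inv_le_inv_add_mul_mul_inv_sub {R Z : Matrix n n ℂ} (hp : (R + Z).PosDef)
    (hm : (R - Z).PosDef) : R⁻¹ ≤ (R + Z)⁻¹ * R * (R - Z)⁻¹ := by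
  have hR := PosDef.of_add_of_sub hp hm.posSemidef
  have hZ := IsHermitian.of_add_of_sub hp.isHermitian hm.isHermitian
  have hp' := (isUnit_iff_isUnit_det _).mp hp.isUnit
  have hm' := (isUnit_iff_isUnit_det _).mp hm.isUnit
  have hR' := (isUnit_iff_isUnit_det _).mp hR.isUnit
  set K := (R + Z)⁻¹ * R * (R - Z)⁻¹
  have hK : K.PosDef := by
    have hmid : (2⁻¹ : ℝ) • ((R + Z)⁻¹ + (R - Z)⁻¹) = K := by
      calc (2⁻¹ : ℝ) • ((R + Z)⁻¹ + (R - Z)⁻¹)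
          = (2⁻¹ : ℝ) • ((K - (R + Z)⁻¹ * Z * (R - Z)⁻¹) + (K + (R + Z)⁻¹ * Z * (R - Z)⁻¹)) := by
            rw [← inv_add_eq_sub hm', ← inv_sub_eq_add hp']
        _ = K := by module
    exact hmid ▸ (hp.inv.add hm.inv).smul (by norm_num)
  have hK_inv : K⁻¹ = R - Z * R⁻¹ * Z := by
    rw [mul_inv_rev, mul_inv_rev, nonsing_inv_nonsing_inv _ hp', nonsing_inv_nonsing_inv _ hm',
      Matrix.sub_mul, Matrix.mul_add, Matrix.mul_add, nonsing_inv_mul _ hR',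
      mul_nonsing_inv_cancel_left _ _ hR']
    noncomm_ring
  calc R⁻¹ ≤ K⁻¹⁻¹ := hK.inv.inv_le_inv <| by
        rw [hK_inv, le_iff, sub_sub_cancel]
        exact hR.inv.posSemidef.mul_mul_of_isHermitian hZ
    _ = K := nonsing_inv_nonsing_inv _ ((isUnit_iff_isUnit_det _).mp hK.isUnit)

theorem trace_mul_inv_le_of_involution {R Y J : Matrix n n ℂ} {t : ℝ} (hY : Y.IsHermitian)
    (hp : (R + t • Y).PosDef) (hm : (R - t • Y).PosDef)
    (hJ : J * J = 1) (hJR : J * R * J = R) (hJY : J * Y * J = -Y) :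
    (Y * R⁻¹ * Y * R⁻¹).trace ≤ (Y * (R + t • Y)⁻¹ * Y * (R + t • Y)⁻¹).trace := by
  have hR := PosDef.of_add_of_sub hp hm.posSemidef
  set X := (R + t • Y)⁻¹
  set X' := (R - t • Y)⁻¹
  set K := X * R * X'
  set V := X * (t • Y) * X'
  have hX' : X' = J * X * J := by
    rw [← inv_conj_involution hJ, Matrix.mul_add, Matrix.add_mul, hJR, mul_smul_comm,
      smul_mul_assoc, hJY, smul_neg, ← sub_eq_add_neg]
  have hsym : (Y * X' * Y * X').trace = (Y * X * Y * X).trace :=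
    hX' ▸ trace_mul_conj_involution hJY X
  have hexp : (Y * X * Y * X).trace + (Y * X' * Y * X').trace
      = 2 * ((Y * K * Y * K).trace + (Y * V * Y * V).trace) := by
    rw [show X = K - V from inv_add_eq_sub ((isUnit_iff_isUnit_det _).mp hm.isUnit),
      show X' = K + V from inv_sub_eq_add ((isUnit_iff_isUnit_det _).mp hp.isUnit)]
    simp only [Matrix.mul_sub, Matrix.sub_mul, Matrix.mul_add, Matrix.add_mul, trace_add,
      trace_sub]
    ring
  have hV : 0 ≤ (Y * V * Y * V).trace := by
    have e : Y * V * Y * V = (t * t) • (Y * X * Y * X' * (Y * X * Y) * X') := by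
      simp only [V, mul_smul_comm, smul_mul_assoc, smul_smul]
      congr 1
      noncomm_ring
    rw [e, trace_smul, Complex.real_smul]
    exact mul_nonneg (by exact_mod_cast mul_self_nonneg t)
      ((hp.inv.posSemidef.mul_mul_of_isHermitian hY).trace_mul_mul_mul_nonneg hm.inv.posSemidef)
  calc (Y * R⁻¹ * Y * R⁻¹).trace ≤ (Y * K * Y * K).trace :=
        hY.trace_mul_mul_mul_le hR.inv.posSemidef.nonneg (inv_le_inv_add_mul_mul_inv_sub hp hm)
    _ ≤ (Y * K * Y * K).trace + (Y * V * Y * V).trace := le_add_of_nonneg_right hV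
    _ = (Y * X * Y * X).trace := by linear_combination (hsym - hexp) / 2

lemma continuousOn_inv_add_smul_one {N : Matrix n n ℂ} (hN : N.PosDef) :
    ContinuousOn (fun r : ℝ => (N + r • 1)⁻¹) (Set.Ici 0) := by
  intro r hr
  have hdet : (N + r • 1).det ≠ 0 := (hN.add_posSemidef (PosSemidef.one.smul hr)).det_pos.ne'
  refine ContinuousAt.continuousWithinAt ((continuousAt_matrix_inv _ ?_).comp (by fun_prop))
  exact NormedRing.inverse_continuousAt (Units.mk0 _ hdet)

lemma trace_mul_inv_add_smul_one_le {N Y : Matrix n n ℂ} (hN : N.PosSemidef)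
    (hY : Y.IsHermitian) {r : ℝ} (hr : 0 < r) :
    (Y * (N + r • 1)⁻¹ * Y * (N + r • 1)⁻¹).trace ≤ (r ^ 2)⁻¹ • (Y * Y).trace := by
  have hNr := PosDef.posSemidef_add hN (PosDef.one.smul hr)
  have hle : (N + r • 1)⁻¹ ≤ r⁻¹ • 1 := by
    have hinv : (r • 1 : Matrix n n ℂ)⁻¹ = r⁻¹ • 1 :=
      inv_eq_left_inv (by rw [smul_mul_smul, Matrix.one_mul, inv_mul_cancel₀ hr.ne', one_smul])
    exact hinv ▸ (PosDef.one.smul hr).inv_le_inv (le_add_of_nonneg_left hN.nonneg)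
  calc _ ≤ (Y * (r⁻¹ • 1) * Y * (r⁻¹ • 1)).trace :=
        hY.trace_mul_mul_mul_le hNr.inv.posSemidef.nonneg hle
    _ = (r ^ 2)⁻¹ • (Y * Y).trace := by
      simp only [Matrix.mul_smul, Matrix.smul_mul, Matrix.mul_one, smul_smul, trace_smul]
      rw [sq, mul_inv]

lemma integrableOn_bkm_integrand {N Y : Matrix n n ℂ} (hN : N.PosDef) (hY : Y.IsHermitian) :
    IntegrableOn (fun r : ℝ => (Y * (N + r • 1)⁻¹ * Y * (N + r • 1)⁻¹).trace.re) (Set.Ioi 0) := by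
  have hcont : ContinuousOn (fun r : ℝ => (Y * (N + r • 1)⁻¹ * Y * (N + r • 1)⁻¹).trace.re)
      (Set.Ici 0) := by
    have hX := continuousOn_inv_add_smul_one hN
    exact Complex.continuous_re.comp_continuousOn <| continuous_id.matrix_trace.comp_continuousOn <|
      ((continuousOn_const.mul hX).mul continuousOn_const).mul hX
  rw [← Set.Ioc_union_Ioi_eq_Ioi zero_le_one]
  refine ((hcont.mono Set.Icc_subset_Ici_self).integrableOn_Icc.mono_set
    Set.Ioc_subset_Icc_self).union ?_
  have hdom : IntegrableOn (fun r : ℝ => (Y * Y).trace.re * r ^ (-2 : ℝ)) (Set.Ioi 1) :=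
    (integrableOn_Ioi_rpow_of_lt (by norm_num) one_pos).const_mul _
  refine hdom.mono' ((hcont.mono (Set.Ioi_subset_Ici zero_le_one)).aestronglyMeasurable
    measurableSet_Ioi) ?_
  filter_upwards [ae_restrict_mem measurableSet_Ioi] with r hr
  have hr0 : (0 : ℝ) < r := zero_lt_one.trans hr
  have hX := (hN.add_posSemidef (PosSemidef.one.smul hr0.le)).inv.posSemidef
  have h0 := Complex.re_le_re ((hX.mul_mul_of_isHermitian hY).trace_mul_nonneg hX)
  have h1 := Complex.re_le_re (trace_mul_inv_add_smul_one_le hN.posSemidef hY hr0)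
  rw [Complex.zero_re] at h0
  rw [Complex.smul_re, smul_eq_mul] at h1
  rw [Real.norm_of_nonneg h0, Real.rpow_neg hr0.le, Real.rpow_two]
  linarith

theorem bkmH_le_bkmH_add_smul_of_involution {N Y J : Matrix n n ℂ} {t : ℝ} (hY : Y.IsHermitian)
    (hp : (N + t • Y).PosDef) (hm : (N - t • Y).PosSemidef)
    (hJ : J * J = 1) (hJN : J * N * J = N) (hJY : J * Y * J = -Y) :
    bkmH N Y ≤ bkmH (N + t • Y) Y := by
  have hN := PosDef.of_add_of_sub hp hm
  refine setIntegral_mono_on (integrableOn_bkm_integrand hN hY)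
    (integrableOn_bkm_integrand hp hY) measurableSet_Ioi fun r (hr : 0 < r) => ?_
  have hr1 : (r • 1 : Matrix n n ℂ).PosDef := PosDef.one.smul hr
  rw [add_right_comm]
  refine Complex.re_le_re (trace_mul_inv_le_of_involution hY ?_ ?_ hJ ?_ hJY)
  · exact add_right_comm N (t • Y) _ ▸ hp.add hr1
  · exact sub_add_eq_add_sub N (t • Y) _ ▸ PosDef.posSemidef_add hm hr1
  · rw [Matrix.mul_add, Matrix.add_mul, hJN, mul_smul_comm, smul_mul_assoc, Matrix.mul_one, hJ]

end Matrix

theorem bkm_midpoint_monotone_general {dP dQ : ℕ}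
    (A : Matrix (Fin dP) (Fin dP) ℂ) (C : Matrix (Fin dQ) (Fin dQ) ℂ)
    (B : Matrix (Fin dP) (Fin dQ) ℂ)
    (hA : A.PosDef) (hC : C.PosDef)
    (M : Matrix (Fin dP ⊕ Fin dQ) (Fin dP ⊕ Fin dQ) ℂ)
    (Y : Matrix (Fin dP ⊕ Fin dQ) (Fin dP ⊕ Fin dQ) ℂ)
    (hM : M = fromBlocks A 0 0 C) (hY : Y = fromBlocks 0 B Bᴴ 0)
    (hplus : (M + Y).PosSemidef) (hminus : (M - Y).PosSemidef)
    (t : ℝ) (ht0 : 0 ≤ t) (ht1 : t < 1) :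
    bkmH (M + t • Y) Y ≥ bkmH M Y := by
  have hY_herm : Y.IsHermitian := by simp [hY, IsHermitian, fromBlocks_conjTranspose]
  have hM_pd : M.PosDef := by
    have hM_psd : M.PosSemidef := by
      simpa using hplus.add_smul_of_abs_le_one hminus (t := 0) (by simp)
    rw [hM_psd.posDef_iff_det_ne_zero, hM, det_fromBlocks_zero₂₁]
    exact mul_ne_zero hA.det_pos.ne' hC.det_pos.ne'
  have hMt_pd : (M + t • Y).PosDef := by
    rw [show M + t • Y = (1 - t) • M + t • (M + Y) by module]
    exact (hM_pd.smul (sub_pos.mpr ht1)).add_posSemidef (hplus.smul ht0)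
  have hMt_psd : (M - t • Y).PosSemidef := by
    simpa [sub_eq_add_neg] using
      hplus.add_smul_of_abs_le_one hminus (t := -t) (abs_le.mpr ⟨by linarith, by linarith⟩)
  let J : Matrix (Fin dP ⊕ Fin dQ) (Fin dP ⊕ Fin dQ) ℂ := fromBlocks 1 0 0 (-1)
  refine bkmH_le_bkmH_add_smul_of_involution hY_herm hMt_pd hMt_psd (J := J) ?_ ?_ ?_
  · simp [J, fromBlocks_multiply, ← fromBlocks_one]
  · simp [J, hM, fromBlocks_multiply]
  · simp [J, hY, fromBlocks_multiply, fromBlocks_neg]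

/-- Midpoint BKM monotonicity: for block-diagonal positive definite
`M = A ⊕ C` and off-diagonal `Y = [[0,B],[B*,0]]` with `M ± Y ⪰ 0`,
`H_{M+tY}(Y,Y) ≥ H_M(Y,Y)` for all `t ∈ [0,1)`. -/
theorem bkm_midpoint_monotone {dP dQ : ℕ} (hdP : 1 ≤ dP) (hdQ : 1 ≤ dQ)
    (A : Matrix (Fin dP) (Fin dP) ℂ) (C : Matrix (Fin dQ) (Fin dQ) ℂ)
    (B : Matrix (Fin dP) (Fin dQ) ℂ)
    (hA : A.PosDef) (hC : C.PosDef)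
    (M : Matrix (Fin dP ⊕ Fin dQ) (Fin dP ⊕ Fin dQ) ℂ)
    (Y : Matrix (Fin dP ⊕ Fin dQ) (Fin dP ⊕ Fin dQ) ℂ)
    (hM : M = fromBlocks A 0 0 C) (hY : Y = fromBlocks 0 B Bᴴ 0)
    (hplus : (M + Y).PosSemidef) (hminus : (M - Y).PosSemidef)
    (t : ℝ) (ht0 : 0 ≤ t) (ht1 : t < 1) :
    bkmH (M + t • Y) Y ≥ bkmH M Y :=
  bkm_midpoint_monotone_general A C B hA hC M Y hM hY hplus hminus t ht0 ht1
end
end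

section
/- Let M = A ⊕ C be a block-diagonal positive definite Hermitian matrix (A of size d_P×d_P, C of size d_Q×d_Q) and let Y = [[0, B],[B*, 0]] be the off-diagonal Hermitian matrix built from a d_P×d_Q complex matrix B. Then H_M(Y,Y) = 2 · Tr[B* Ω_{A,C}⁻¹(B)]. -/
/-!
The resolvent of `M = A ⊕ C` is block diagonal, `(M + r)⁻¹ = (A + r)⁻¹ ⊕ (C + r)⁻¹`, so for the
off-diagonal `Y` the integrand `Tr[Y (M + r)⁻¹ Y (M + r)⁻¹]` splits into two traces that agree by
cyclicity, both equal to `Tr[B* (A + r)⁻¹ B (C + r)⁻¹]`. The real part of `Tr[B* ·]` is a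
continuous linear functional, so it commutes with the Bochner integral defining `Ω_{A,C}⁻¹(B)`.
The integrand is integrable: it is continuous on `[0, ∞)` because `A, C` are positive definite,
and it is `O(r⁻²)` because `r (A + r)⁻¹ = (r⁻¹ A + 1)⁻¹ → 1`.
-/

open Matrix MeasureTheory
open scoped ComplexOrder

noncomputable section

attribute [local instance] Matrix.frobeniusNormedAddCommGroup Matrix.frobeniusNormedSpace

/-- BKM kernel `Ω_{A,C}⁻¹(B) = ∫₀^∞ (A+rI)⁻¹ B (C+rI)⁻¹ dr` (Bochner integral). -/
def Omega {dP dQ : ℕ} (A : Matrix (Fin dP) (Fin dP) ℂ) (C : Matrix (Fin dQ) (Fin dQ) ℂ)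
    (B : Matrix (Fin dP) (Fin dQ) ℂ) : Matrix (Fin dP) (Fin dQ) ℂ :=
  ∫ r in Set.Ioi (0 : ℝ), (A + r • 1)⁻¹ * B * (C + r • 1)⁻¹

open Set Filter Topology Asymptotics

theorem integrableOn_Ioi_of_continuousOn_of_isBigO_rpow {E : Type*} [NormedAddCommGroup E]
    {f : ℝ → E} {a s : ℝ} (hs : s < -1) (hf : ContinuousOn f (Ici a))
    (ho : f =O[atTop] fun r => r ^ s) : IntegrableOn f (Ioi a) :=
  ((hf.locallyIntegrableOn measurableSet_Ici).integrableOn_of_isBigO_atTop ho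
    (integrableAtFilter_rpow_atTop_iff.2 hs)).mono_set Ioi_subset_Ici_self

namespace Matrix

/-- Instance search does not see that the Frobenius norm topology is the product topology of
matrices, so `Integrable` on Frobenius-normed matrices needs this instance to elaborate. -/
abbrev frobeniusContinuousENorm {m n : Type*} [Fintype m] [Fintype n] :
    ContinuousENorm (Matrix m n ℂ) :=
  SeminormedAddGroup.toContinuousENorm

attribute [local instance] frobeniusContinuousENorm

variable {m n : Type*}

theorem inv_smul_of_ne_zero [Fintype n] [DecidableEq n] {K : Type*} [Field K]
    (A : Matrix n n K) {k : K} (hk : k ≠ 0) : (k • A)⁻¹ = k⁻¹ • A⁻¹ := by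
  by_cases hA : IsUnit A.det
  · exact inv_smul' _ (Units.mk0 k hk) hA
  · have hkA : ¬IsUnit (k • A).det := by simpa [det_smul, hk] using hA
    rw [nonsing_inv_apply_not_isUnit _ hA, nonsing_inv_apply_not_isUnit _ hkA, smul_zero]

theorem PosDef.add_smul_one [DecidableEq n] {A : Matrix n n ℂ} (hA : A.PosDef) {r : ℝ}
    (hr : 0 ≤ r) : (A + r • (1 : Matrix n n ℂ)).PosDef :=
  hA.add_posSemidef (PosSemidef.one.smul hr)

theorem continuousOn_inv_add_smul_one_s3 [Fintype n] [DecidableEq n] {A : Matrix n n ℂ}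
    (hA : A.PosDef) : ContinuousOn (fun r : ℝ => (A + r • (1 : Matrix n n ℂ))⁻¹) (Ici 0) := by
  intro r hr
  refine ContinuousAt.continuousWithinAt (ContinuousAt.comp (g := Inv.inv) ?_ (by fun_prop))
  refine continuousAt_matrix_inv _ ?_
  rw [Ring.inverse_eq_inv']
  exact continuousAt_inv₀ (hA.add_smul_one hr).det_pos.ne'

theorem smul_inv_add_smul_one [Fintype n] [DecidableEq n] (A : Matrix n n ℂ) {r : ℝ}
    (hr : r ≠ 0) : r • (A + r • (1 : Matrix n n ℂ))⁻¹ = (r⁻¹ • A + 1)⁻¹ := by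
  have hA : A + r • (1 : Matrix n n ℂ) = (r : ℂ) • (r⁻¹ • A + 1) := by
    rw [Complex.coe_smul, smul_add, smul_smul, mul_inv_cancel₀ hr, one_smul]
  rw [hA, inv_smul_of_ne_zero _ (Complex.ofReal_ne_zero.2 hr), ← Complex.ofReal_inv,
    Complex.coe_smul, smul_smul, mul_inv_cancel₀ hr, one_smul]

theorem tendsto_smul_inv_add_smul_one [Fintype n] [DecidableEq n] (A : Matrix n n ℂ) :
    Tendsto (fun r : ℝ => r • (A + r • (1 : Matrix n n ℂ))⁻¹) atTop (𝓝 1) := by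
  have hcont : ContinuousAt (fun t : ℝ => (t • A + 1)⁻¹) 0 := by
    refine ContinuousAt.comp (g := Inv.inv) ?_ (by fun_prop)
    simpa using continuousAt_matrix_inv (1 : Matrix n n ℂ) (by simp)
  have hlim := hcont.tendsto.comp tendsto_inv_atTop_zero
  simp only [zero_smul, zero_add, inv_one] at hlim
  refine hlim.congr' ?_
  filter_upwards [eventually_ne_atTop 0] with r hr
  exact (smul_inv_add_smul_one A hr).symm

theorem isBigO_inv_add_smul_one_mul_mul [Fintype m] [Fintype n] [DecidableEq m] [DecidableEq n]
    (A : Matrix m m ℂ) (C : Matrix n n ℂ) (B : Matrix m n ℂ) :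
    (fun r : ℝ => (A + r • (1 : Matrix m m ℂ))⁻¹ * B * (C + r • (1 : Matrix n n ℂ))⁻¹)
      =O[atTop] fun r => r ^ (-2 : ℝ) := by
  have hmul : Continuous fun X : Matrix m m ℂ × Matrix n n ℂ => X.1 * B * X.2 :=
    (continuous_fst.matrix_mul continuous_const).matrix_mul continuous_snd
  have hlim := (hmul.tendsto (1, 1)).comp
    ((tendsto_smul_inv_add_smul_one A).prodMk_nhds (tendsto_smul_inv_add_smul_one C))
  refine ((isBigO_refl (fun r : ℝ => r ^ (-2 : ℝ)) atTop).smul (hlim.isBigO_one ℝ)).congr' ?_ ?_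
  · filter_upwards [eventually_gt_atTop 0] with r hr
    have hr2 : r ^ (-2 : ℝ) * (r * r) = 1 := by
      rw [Real.rpow_neg hr.le, Real.rpow_two, ← sq, inv_mul_cancel₀ (by positivity)]
    simp only [Function.comp_apply, Matrix.smul_mul, Matrix.mul_smul, smul_smul, hr2, one_smul]
  · simp

theorem integrableOn_inv_add_smul_one_mul_mul [Fintype m] [Fintype n] [DecidableEq m]
    [DecidableEq n] {A : Matrix m m ℂ} {C : Matrix n n ℂ} (hA : A.PosDef) (hC : C.PosDef)
    (B : Matrix m n ℂ) :
    IntegrableOn (fun r : ℝ => (A + r • (1 : Matrix m m ℂ))⁻¹ * B * (C + r • (1 : Matrix n n ℂ))⁻¹)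
      (Ioi 0) := by
  have hmul : Continuous fun X : Matrix m m ℂ × Matrix n n ℂ => X.1 * B * X.2 :=
    (continuous_fst.matrix_mul continuous_const).matrix_mul continuous_snd
  exact integrableOn_Ioi_of_continuousOn_of_isBigO_rpow (by norm_num)
    (hmul.comp_continuousOn
      ((continuousOn_inv_add_smul_one_s3 hA).prodMk (continuousOn_inv_add_smul_one_s3 hC)) :)
    (isBigO_inv_add_smul_one_mul_mul A C B)

theorem integral_re_trace_mul [Fintype m] [Fintype n] {α : Type*} [MeasurableSpace α]
    {μ : Measure α} {f : α → Matrix m n ℂ} (hf : Integrable f μ) (X : Matrix n m ℂ) :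
    ∫ a, ((X * f a).trace).re ∂μ = ((X * ∫ a, f a ∂μ).trace).re :=
  (LinearMap.toContinuousLinearMap
    (Complex.reLm ∘ₗ traceLinearMap n ℝ ℂ ∘ₗ mulLeftLinearMap n ℝ X)).integral_comp_comm hf

theorem trace_fromBlocks [Fintype m] [Fintype n] {R : Type*} [AddCommMonoid R]
    (A : Matrix m m R) (B : Matrix m n R) (C : Matrix n m R) (D : Matrix n n R) :
    (fromBlocks A B C D).trace = A.trace + D.trace := by
  simp [trace, Fintype.sum_sum_type]

theorem inv_fromBlocks_zero_zero [Fintype m] [Fintype n] [DecidableEq m] [DecidableEq n]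
    {R : Type*} [CommRing R] (A : Matrix m m R) (D : Matrix n n R) (hAD : IsUnit A ↔ IsUnit D) :
    (fromBlocks A 0 0 D)⁻¹ = fromBlocks A⁻¹ 0 0 D⁻¹ := by
  simpa using inv_fromBlocks_zero₂₁_of_isUnit_iff A 0 D hAD

theorem trace_fromBlocks_offDiag_mul_fromBlocks_diag_sq [Fintype m] [Fintype n] {R : Type*}
    [CommRing R] (B : Matrix m n R) (B' : Matrix n m R) (P : Matrix m m R) (Q : Matrix n n R) :
    (fromBlocks 0 B B' 0 * fromBlocks P 0 0 Q * fromBlocks 0 B B' 0 * fromBlocks P 0 0 Q).trace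
      = 2 * (B' * (P * B * Q)).trace := by
  simp only [fromBlocks_multiply, Matrix.zero_mul, Matrix.mul_zero, add_zero, zero_add,
    trace_fromBlocks]
  rw [trace_mul_cycle (B * Q), trace_mul_cycle P]
  simp only [Matrix.mul_assoc, two_mul]

theorem trace_offDiag_mul_inv_fromBlocks_add_smul_one_sq [Fintype m] [Fintype n]
    [DecidableEq m] [DecidableEq n] {A : Matrix m m ℂ} {C : Matrix n n ℂ} (hA : A.PosDef)
    (hC : C.PosDef) (B : Matrix m n ℂ) {r : ℝ} (hr : 0 ≤ r) :
    (fromBlocks 0 B Bᴴ 0 * (fromBlocks A 0 0 C + r • 1)⁻¹ * fromBlocks 0 B Bᴴ 0 *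
        (fromBlocks A 0 0 C + r • 1)⁻¹).trace
      = 2 * (Bᴴ * ((A + r • 1)⁻¹ * B * (C + r • 1)⁻¹)).trace := by
  have hsum : fromBlocks A 0 0 C + r • (1 : Matrix (m ⊕ n) (m ⊕ n) ℂ)
      = fromBlocks (A + r • 1) 0 0 (C + r • 1) := by
    rw [← fromBlocks_one, fromBlocks_smul, fromBlocks_add]
    simp only [smul_zero, add_zero]
  rw [hsum, inv_fromBlocks_zero_zero _ _
      (iff_of_true (hA.add_smul_one hr).isUnit (hC.add_smul_one hr).isUnit),
    trace_fromBlocks_offDiag_mul_fromBlocks_diag_sq]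

end Matrix

theorem bkmH_block_eval_general {dP dQ : ℕ}
    (A : Matrix (Fin dP) (Fin dP) ℂ) (C : Matrix (Fin dQ) (Fin dQ) ℂ)
    (B : Matrix (Fin dP) (Fin dQ) ℂ)
    (hA : A.PosDef) (hC : C.PosDef)
    (M : Matrix (Fin dP ⊕ Fin dQ) (Fin dP ⊕ Fin dQ) ℂ)
    (Y : Matrix (Fin dP ⊕ Fin dQ) (Fin dP ⊕ Fin dQ) ℂ)
    (hM : M = fromBlocks A 0 0 C) (hY : Y = fromBlocks 0 B Bᴴ 0) :
    bkmH M Y = 2 * ((Bᴴ * Omega A C B).trace).re := by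
  subst hM hY
  calc bkmH (fromBlocks A 0 0 C) (fromBlocks 0 B Bᴴ 0)
      = ∫ r in Ioi 0, 2 * ((Bᴴ * ((A + r • 1)⁻¹ * B * (C + r • 1)⁻¹)).trace).re :=
        setIntegral_congr_fun measurableSet_Ioi fun r hr => by
          simp [trace_offDiag_mul_inv_fromBlocks_add_smul_one_sq hA hC B (le_of_lt hr)]
    _ = 2 * ((Bᴴ * Omega A C B).trace).re := by
        rw [integral_const_mul,
          integral_re_trace_mul (integrableOn_inv_add_smul_one_mul_mul hA hC B)]
        rfl

/-- For block-diagonal positive definite `M = A ⊕ C` and off-diagonal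
`Y = [[0,B],[B*,0]]`, the BKM form evaluates as `H_M(Y,Y) = 2 Tr[B* Ω_{A,C}⁻¹(B)]`. -/
theorem bkmH_block_eval {dP dQ : ℕ} (hdP : 1 ≤ dP) (hdQ : 1 ≤ dQ)
    (A : Matrix (Fin dP) (Fin dP) ℂ) (C : Matrix (Fin dQ) (Fin dQ) ℂ)
    (B : Matrix (Fin dP) (Fin dQ) ℂ)
    (hA : A.PosDef) (hC : C.PosDef)
    (M : Matrix (Fin dP ⊕ Fin dQ) (Fin dP ⊕ Fin dQ) ℂ)
    (Y : Matrix (Fin dP ⊕ Fin dQ) (Fin dP ⊕ Fin dQ) ℂ)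
    (hM : M = fromBlocks A 0 0 C) (hY : Y = fromBlocks 0 B Bᴴ 0) :
    bkmH M Y = 2 * ((Bᴴ * Omega A C B).trace).re :=
  bkmH_block_eval_general A C B hA hC M Y hM hY
end
end

section
/- For q ∈ (0, 1/2), let ρ_q be the 2×2 density matrix [[1−q, √(q(1−q))],[√(q(1−q)), q]] with pinching Πρ_q = diag(1−q, q). Then D(ρ_q‖Πρ_q) = −q log q − (1−q) log(1−q), the BKM form equals Tr[B_q* Ω_{A_q,C_q}⁻¹(B_q)] = q(1−q)·L(1−q, q) where A_q = (1−q), C_q = (q), B_q = (√(q(1−q))), and the ratio D(ρ_q‖Πρ_q) / (q(1−q)·L(1−q,q)) tends to 1 as q → 0⁺. -/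
open Matrix MeasureTheory
open scoped ComplexOrder

noncomputable section

/-- Matrix logarithm of a Hermitian matrix via functional calculus on its eigenvalues,
with the convention `log 0 = 0` (since `Real.log 0 = 0`); junk value `0` on
non-Hermitian matrices. -/
def mlog {m : Type*} [Fintype m] [DecidableEq m] (M : Matrix m m ℂ) : Matrix m m ℂ :=
  open scoped Classical in
  if h : M.IsHermitian then
    (h.eigenvectorUnitary : Matrix m m ℂ) *
      Matrix.diagonal (fun i => (Real.log (h.eigenvalues i) : ℂ)) *
      (h.eigenvectorUnitary : Matrix m m ℂ)ᴴ
  else 0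

/-- Umegaki quantum relative entropy `D(ρ‖σ) = Tr[ρ (log ρ − log σ)]`. -/
def relEnt {m : Type*} [Fintype m] [DecidableEq m] (ρ σ : Matrix m m ℂ) : ℝ :=
  ((ρ * (mlog ρ - mlog σ)).trace).re

attribute [local instance] Matrix.frobeniusNormedAddCommGroup Matrix.frobeniusNormedSpace

/-- The inverse logarithmic mean `L(a,c)`. -/
def Lmean (a c : ℝ) : ℝ :=
  if a = c then 1 / a else (Real.log a - Real.log c) / (a - c)

/-- The pure-state family `ρ_q = [[1−q, √(q(1−q))],[√(q(1−q)), q]]`. -/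
def rhoq (q : ℝ) : Matrix (Fin 2) (Fin 2) ℂ :=
  !![((1 - q : ℝ) : ℂ), ((Real.sqrt (q * (1 - q)) : ℝ) : ℂ);
     ((Real.sqrt (q * (1 - q)) : ℝ) : ℂ), ((q : ℝ) : ℂ)]

/-- Its pinching `Πρ_q = diag(1−q, q)`. -/
def pinchq (q : ℝ) : Matrix (Fin 2) (Fin 2) ℂ :=
  Matrix.diagonal ![((1 - q : ℝ) : ℂ), ((q : ℝ) : ℂ)]

/-!
`ρ_q` is a rank-one projection, so `log ρ_q = 0` and `D(ρ_q‖Πρ_q) = -∑ᵢ (ρ_q)ᵢᵢ log (Πρ_q)ᵢᵢ`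
is the binary entropy. In dimension one the BKM kernel is multiplication by
`∫₀^∞ dr / ((a + r)(c + r)) = L(a, c)`. As `q → 0⁺` both the entropy and
`q(1-q) L(1-q, q)` are `-q log q · (1 + o(1))`, because `log (1 - q) / q → -1` and
`1 / log q → 0`.
-/

open Filter Topology Set

namespace Matrix

variable {m : Type*} [Fintype m] [DecidableEq m]

lemma mul_diagonal_comp_eq_diagonal_comp_mul {R : Type*} [CommRing R] [IsDomain R]
    {W : Matrix m m R} {lam d : m → R} (h : W * diagonal lam = diagonal d * W) (f : R → R) :
    W * diagonal (f ∘ lam) = diagonal (f ∘ d) * W := by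
  ext i j
  have hij : W i j * lam j = d i * W i j := by simpa using congrFun (congrFun h i) j
  simp only [mul_diagonal, diagonal_mul, Function.comp_apply]
  rcases eq_or_ne (W i j) 0 with hW | hW
  · simp [hW]
  · rw [mul_left_cancel₀ hW (hij.trans (mul_comm _ _)), mul_comm]

lemma cfc_diagonal_ofReal (d : m → ℝ) (f : ℝ → ℝ) :
    cfc f (diagonal fun i => (d i : ℂ)) = diagonal fun i => (f (d i) : ℂ) := by
  have hD : (diagonal fun i => (d i : ℂ)).IsHermitian :=
    isHermitian_diagonal_iff.2 fun i => Complex.conj_ofReal _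
  have hspec := hD.spectral_theorem
  rw [Unitary.conjStarAlgAut_apply] at hspec
  rw [hD.cfc_eq, IsHermitian.cfc, Unitary.conjStarAlgAut_apply]
  set U : Matrix m m ℂ := (hD.eigenvectorUnitary : Matrix m m ℂ)
  have hUU : star U * U = 1 := Unitary.coe_star_mul_self hD.eigenvectorUnitary
  have hU : U * star U = 1 := Unitary.coe_mul_star_self hD.eigenvectorUnitary
  have hcomm : U * diagonal (RCLike.ofReal ∘ hD.eigenvalues) =
      diagonal (fun i => (d i : ℂ)) * U := by
    refine ((congrArg (· * U) hspec).trans ?_).symm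
    rw [mul_assoc _ (star U), hUU, mul_one]
  have key := mul_diagonal_comp_eq_diagonal_comp_mul hcomm (fun z => (f z.re : ℂ))
  convert congrArg (· * star U) key using 1
  · simp [Function.comp_def]
  · simp [Function.comp_def, mul_assoc, hU]

end Matrix

section RelativeEntropy

variable {m : Type*} [Fintype m] [DecidableEq m]

lemma mlog_eq_cfc {M : Matrix m m ℂ} (hM : M.IsHermitian) : mlog M = cfc Real.log M := by
  rw [hM.cfc_eq, IsHermitian.cfc, mlog, dif_pos hM, Unitary.conjStarAlgAut_apply]
  rfl

lemma mlog_diagonal_ofReal (d : m → ℝ) :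
    mlog (diagonal fun i => (d i : ℂ)) = diagonal fun i => (Real.log (d i) : ℂ) := by
  rw [mlog_eq_cfc (isHermitian_diagonal_iff.2 fun i => Complex.conj_ofReal _),
    cfc_diagonal_ofReal]

lemma mlog_eq_zero_of_isIdempotentElem {P : Matrix m m ℂ} (hP : P.IsHermitian)
    (hPP : IsIdempotentElem P) : mlog P = 0 := by
  rw [mlog_eq_cfc hP, ← cfc_zero ℝ P]
  refine cfc_congr fun x hx => ?_
  rcases hPP.spectrum_subset ℝ hx with rfl | rfl <;> simp

lemma relEnt_diagonal_ofReal_of_isIdempotentElem {P : Matrix m m ℂ} (hP : P.IsHermitian)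
    (hPP : IsIdempotentElem P) (d : m → ℝ) :
    relEnt P (diagonal fun i => (d i : ℂ)) = -∑ i, (P i i).re * Real.log (d i) := by
  rw [relEnt, mlog_eq_zero_of_isIdempotentElem hP hPP, mlog_diagonal_ofReal, zero_sub, mul_neg,
    trace_neg, Complex.neg_re, trace, Complex.re_sum]
  simp [mul_diagonal]

end RelativeEntropy

lemma rhoq_isHermitian (q : ℝ) : (rhoq q).IsHermitian := by
  ext i j
  fin_cases i <;> fin_cases j <;> simp [rhoq]

lemma rhoq_isIdempotentElem {q : ℝ} (hq0 : 0 ≤ q) (hq1 : q ≤ 1) : IsIdempotentElem (rhoq q) := by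
  have hsq : Real.sqrt (q * (1 - q)) * Real.sqrt (q * (1 - q)) = q * (1 - q) :=
    Real.mul_self_sqrt (by nlinarith)
  ext i j
  fin_cases i <;> fin_cases j <;>
    simp only [rhoq, Complex.ofReal_sub, Complex.ofReal_one, Fin.zero_eta, Fin.mk_one,
      Matrix.mul_apply, of_apply, cons_val', cons_val_fin_one, cons_val_zero, cons_val_one,
      Fin.sum_univ_two] <;>
    norm_cast <;> first | ring1 | linear_combination hsq

lemma pinchq_eq_diagonal_ofReal (q : ℝ) :
    pinchq q = Matrix.diagonal fun i => ((![1 - q, q] i : ℝ) : ℂ) := by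
  rw [pinchq]
  congr
  ext i
  fin_cases i <;> rfl

lemma relEnt_rhoq_pinchq {q : ℝ} (hq0 : 0 ≤ q) (hq1 : q ≤ 1) :
    relEnt (rhoq q) (pinchq q) = -q * Real.log q - (1 - q) * Real.log (1 - q) := by
  rw [pinchq_eq_diagonal_ofReal, relEnt_diagonal_ofReal_of_isIdempotentElem (rhoq_isHermitian q)
    (rhoq_isIdempotentElem hq0 hq1)]
  simp only [rhoq, of_apply, cons_val', cons_val_fin_one, Fin.sum_univ_two, cons_val_zero,
    cons_val_one, Complex.ofReal_re]
  ring

lemma hasDerivAt_log_add_sub_log_add_div {a c x : ℝ} (hac : a ≠ c) (hax : 0 < a + x)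
    (hcx : 0 < c + x) :
    HasDerivAt (fun r => (Real.log (c + r) - Real.log (a + r)) / (a - c))
      ((a + x) * (c + x))⁻¹ x := by
  have hlog : ∀ b : ℝ, 0 < b + x → HasDerivAt (fun r => Real.log (b + r)) (b + x)⁻¹ x :=
    fun b hb => by simpa using ((hasDerivAt_id x).const_add b).log hb.ne'
  refine (((hlog c hcx).sub (hlog a hax)).div_const (a - c)).congr_deriv ?_
  field_simp [sub_ne_zero.2 hac]
  ring

lemma tendsto_log_add_sub_log_add_atTop (a c : ℝ) :
    Tendsto (fun r => Real.log (c + r) - Real.log (a + r)) atTop (𝓝 0) := by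
  have h := (Real.tendsto_log_comp_add_sub_log c).sub (Real.tendsto_log_comp_add_sub_log a)
  rw [sub_zero] at h
  refine h.congr fun r => ?_
  simp only [add_comm r]
  ring

lemma integral_Ioi_inv_mul_add_eq_Lmean {a c : ℝ} (ha : 0 < a) (hc : 0 < c) :
    ∫ r in Ioi (0 : ℝ), ((a + r) * (c + r))⁻¹ = Lmean a c := by
  have hpos : ∀ x ∈ Ioi (0 : ℝ), 0 ≤ ((a + x) * (c + x))⁻¹ := fun x hx => by
    have : (0 : ℝ) < x := hx; positivity
  obtain ⟨F, hF, hF0, hFtop⟩ : ∃ F : ℝ → ℝ,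
      (∀ x ∈ Ici (0 : ℝ), HasDerivAt F ((a + x) * (c + x))⁻¹ x) ∧
      F 0 = -Lmean a c ∧ Tendsto F atTop (𝓝 0) := by
    rcases eq_or_ne a c with rfl | hac
    · refine ⟨fun r => -(a + r)⁻¹, fun x (hx : 0 ≤ x) => ?_, by simp [Lmean], ?_⟩
      · have hax : a + x ≠ 0 := by positivity
        refine (((hasDerivAt_id' x).const_add a).inv hax).neg.congr_deriv ?_
        rw [neg_div, neg_neg, one_div, sq]
      · simpa using (tendsto_inv_atTop_zero.comp (tendsto_atTop_add_const_left _ a tendsto_id)).neg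
    · refine ⟨fun r => (Real.log (c + r) - Real.log (a + r)) / (a - c),
        fun x (hx : 0 ≤ x) => hasDerivAt_log_add_sub_log_add_div hac (by positivity)
          (by positivity), ?_,
        by simpa using (tendsto_log_add_sub_log_add_atTop a c).div_const (a - c)⟩
      simp only [add_zero, Lmean, if_neg hac]
      rw [← neg_div, neg_sub]
  rw [integral_Ioi_of_hasDerivAt_of_nonneg' hF hpos hFtop, hF0, zero_sub, neg_neg]

lemma inv_fin_one_add_smul_one (a r : ℝ) :
    (!![(a : ℂ)] + r • 1)⁻¹ = !![((a + r)⁻¹ : ℂ)] := by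
  have : !![(a : ℂ)] + r • 1 = !![((a + r : ℝ) : ℂ)] := by
    ext i j; fin_cases i; fin_cases j; simp
  rw [this, Matrix.inv_def, Matrix.det_fin_one_of, Matrix.adjugate_fin_one, Ring.inverse_eq_inv']
  ext i j; fin_cases i; fin_cases j; simp

lemma Omega_fin_one {a c : ℝ} (ha : 0 < a) (hc : 0 < c) (B : Matrix (Fin 1) (Fin 1) ℂ) :
    Omega !![(a : ℂ)] !![(c : ℂ)] B = Lmean a c • B := by
  have hint : ∀ r : ℝ, (!![(a : ℂ)] + r • 1)⁻¹ * B * (!![(c : ℂ)] + r • 1)⁻¹ =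
      ((a + r) * (c + r))⁻¹ • B := fun r => by
    rw [inv_fin_one_add_smul_one, inv_fin_one_add_smul_one]
    ext i j; fin_cases i; fin_cases j
    simp only [cons_mul, Matrix.empty_mul, Equiv.symm_apply_apply, Matrix.mul_apply,
      Finset.univ_unique, Fin.default_eq_zero, of_apply, cons_val', vecMul, dotProduct,
      cons_val_fin_one, Finset.sum_singleton, Fin.zero_eta, _root_.mul_inv_rev,
      Matrix.smul_apply, Complex.real_smul,
      Complex.ofReal_mul, Complex.ofReal_inv, Complex.ofReal_add]
    ring
  simp_rw [Omega, hint, integral_smul_const, integral_Ioi_inv_mul_add_eq_Lmean ha hc]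

lemma re_trace_conjTranspose_mul_Omega_fin_one {a c : ℝ} (ha : 0 < a) (hc : 0 < c) (b : ℝ) :
    ((!![(b : ℂ)]ᴴ * Omega !![(a : ℂ)] !![(c : ℂ)] !![(b : ℂ)]).trace).re = b ^ 2 * Lmean a c := by
  rw [Omega_fin_one ha hc]
  simp only [trace, Finset.univ_unique, Fin.default_eq_zero, smul_of, smul_cons,
    Complex.real_smul, Matrix.smul_empty, diag_apply, Matrix.mul_apply, conjTranspose_apply,
    of_apply, cons_val', cons_val_fin_one, RCLike.star_def, Complex.conj_ofReal,
    Finset.sum_singleton, Complex.mul_re, Complex.ofReal_re, Complex.ofReal_im, mul_zero, sub_zero]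
  ring

lemma tendsto_log_one_sub_div_nhdsGT_zero :
    Tendsto (fun q => Real.log (1 - q) / q) (𝓝[>] 0) (𝓝 (-1)) := by
  have hd : HasDerivAt (fun q : ℝ => Real.log (1 - q)) (-1) 0 := by
    simpa using ((hasDerivAt_id (0 : ℝ)).const_sub 1).log (by norm_num)
  simpa [div_eq_inv_mul] using hd.tendsto_slope_zero_right

lemma entropy_div_mul_Lmean_eq {q : ℝ} (hq0 : 0 < q) (hq : q < 1 / 2) :
    (-q * Real.log q - (1 - q) * Real.log (1 - q)) / (q * (1 - q) * Lmean (1 - q) q) =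
      (1 - 2 * q) / (1 - q) *
        ((1 + (1 - q) * (Real.log (1 - q) / q) * (Real.log q)⁻¹) /
          (1 - q * (Real.log (1 - q) / q) * (Real.log q)⁻¹)) := by
  have hlog : Real.log q < 0 := Real.log_neg hq0 (by linarith)
  have hlt : Real.log q < Real.log (1 - q) := Real.log_lt_log hq0 (by linarith)
  rw [Lmean, if_neg (by linarith)]
  have h1 : 1 - q - q ≠ 0 := by linarith
  have h2 : 1 - q ≠ 0 := by linarith
  have h3 : Real.log (1 - q) - Real.log q ≠ 0 := by linarith
  have h4 : Real.log q - Real.log (1 - q) ≠ 0 := by linarith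
  have h5 : Real.log q ≠ 0 := hlog.ne
  have h6 : q ≠ 0 := hq0.ne'
  field_simp
  ring

lemma tendsto_entropy_div_mul_Lmean_nhdsGT_zero :
    Tendsto (fun q => (-q * Real.log q - (1 - q) * Real.log (1 - q)) /
      (q * (1 - q) * Lmean (1 - q) q)) (𝓝[>] 0) (𝓝 1) := by
  have hq : Tendsto (fun q : ℝ => q) (𝓝[>] 0) (𝓝 0) := tendsto_nhdsWithin_of_tendsto_nhds tendsto_id
  have hu := tendsto_log_one_sub_div_nhdsGT_zero
  have hv : Tendsto (fun q => (Real.log q)⁻¹) (𝓝[>] 0) (𝓝 0) :=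
    Real.tendsto_log_nhdsGT_zero.inv_tendsto_atBot
  have h1 : Tendsto (fun _ : ℝ => (1 : ℝ)) (𝓝[>] 0) (𝓝 1) := tendsto_const_nhds
  have hlim := ((h1.sub (hq.const_mul 2)).div (h1.sub hq) (by norm_num)).mul
    ((h1.add (((h1.sub hq).mul hu).mul hv)).div (h1.sub ((hq.mul hu).mul hv)) (by norm_num))
  norm_num at hlim
  refine hlim.congr' ?_
  filter_upwards [Ioo_mem_nhdsGT (by norm_num : (0 : ℝ) < 1 / 2)] with q ⟨hq0, hq⟩
  exact (entropy_div_mul_Lmean_eq hq0 hq).symm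

/-- On the two-level family: the relative entropy equals the binary entropy, the BKM
form equals `q(1−q) L(1−q,q)`, and their ratio tends to `1` as `q → 0⁺`. -/
theorem two_level_bkm_asymptotics :
    (∀ q : ℝ, q ∈ Set.Ioo (0 : ℝ) (1 / 2) →
      relEnt (rhoq q) (pinchq q)
        = -q * Real.log q - (1 - q) * Real.log (1 - q)) ∧
    (∀ q : ℝ, q ∈ Set.Ioo (0 : ℝ) (1 / 2) →
      (((!![((Real.sqrt (q * (1 - q)) : ℝ) : ℂ)] : Matrix (Fin 1) (Fin 1) ℂ)ᴴ *
          Omega (!![((1 - q : ℝ) : ℂ)] : Matrix (Fin 1) (Fin 1) ℂ)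
            (!![((q : ℝ) : ℂ)] : Matrix (Fin 1) (Fin 1) ℂ)
            (!![((Real.sqrt (q * (1 - q)) : ℝ) : ℂ)] : Matrix (Fin 1) (Fin 1) ℂ)).trace).re
        = q * (1 - q) * Lmean (1 - q) q) ∧
    Filter.Tendsto
      (fun q : ℝ => relEnt (rhoq q) (pinchq q) / (q * (1 - q) * Lmean (1 - q) q))
      (nhdsWithin 0 (Set.Ioi 0)) (nhds 1) := by
  refine ⟨fun q ⟨hq0, hq⟩ => relEnt_rhoq_pinchq hq0.le (by linarith), fun q ⟨hq0, hq⟩ => ?_, ?_⟩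
  · have hq1 : 0 < 1 - q := by linarith
    rw [re_trace_conjTranspose_mul_Omega_fin_one hq1 hq0,
      Real.sq_sqrt (mul_nonneg hq0.le hq1.le)]
  · refine tendsto_entropy_div_mul_Lmean_nhdsGT_zero.congr' ?_
    filter_upwards [Ioo_mem_nhdsGT (by norm_num : (0 : ℝ) < 1)] with q ⟨hq0, hq1⟩
    rw [relEnt_rhoq_pinchq hq0.le hq1.le]
end
end

section
/- For every K > 1 there exist dimensions d_P, d_Q ≥ 1 and a density matrix ρ = [[A, B],[B*, C]] on ℂ^{d_P+d_Q} with A and C positive definite, B ≠ 0, and 0 < Tr(C) < λ_min(A), such that Tr[B* Ω_{A,C}⁻¹(B)] ≥ K · ‖B‖_F² · log(λ_min(A) / Tr(C)). -/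
open Matrix MeasureTheory
open scoped ComplexOrder

noncomputable section


attribute [local instance] Matrix.frobeniusNormedAddCommGroup Matrix.frobeniusNormedSpace

/-! For scalar blocks `A = a • 1`, `C = c • 1` the BKM kernel is multiplication by
`∫₀^∞ dr / ((a + r)(c + r)) = (log a - log c) / (a - c)`, so
`Tr[B* Ω(B)] = ‖B‖_F² log (a / c) / (a - c)`. Its ratio to `‖B‖_F² log (λ_min A / Tr C)` is
`1 / (a - c)`, unbounded as `a - c → 0`. A `2 × 2` density matrix with `a + c = 1`,
`a - c = 1 / K` and off-diagonal entry `√(a c)` attains the ratio `K`. -/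

open Set Filter Real Topology

theorem integral_Ioi_inv_add_mul_inv_add {a c : ℝ} (ha : 0 < a) (hc : 0 < c) (hac : a ≠ c) :
    ∫ r in Ioi (0 : ℝ), ((a + r) * (c + r))⁻¹ = (log a - log c) / (a - c) := by
  have hsub : a - c ≠ 0 := sub_ne_zero.mpr hac
  set F : ℝ → ℝ := fun r => (log (c + r) - log (a + r)) / (a - c)
  have hF : ∀ r ∈ Ici (0 : ℝ), HasDerivAt F ((a + r) * (c + r))⁻¹ r := by
    intro r (hr : 0 ≤ r)
    have hcr : c + r ≠ 0 := by positivity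
    have har : a + r ≠ 0 := by positivity
    refine ((((hasDerivAt_id' r).const_add c).log hcr).sub
      (((hasDerivAt_id' r).const_add a).log har)).div_const (a - c) |>.congr_deriv ?_
    field_simp
    ring
  have hlim : Tendsto F atTop (𝓝 0) := by
    have hratio : Tendsto (fun r => (c + r) / (a + r)) atTop (𝓝 1) := by
      have := (tendsto_const_nhds (x := (1 : ℝ))).sub
        ((tendsto_const_nhds (x := a - c)).div_atTop (tendsto_atTop_add_const_left _ a tendsto_id))
      rw [sub_zero] at this
      refine this.congr' ?_
      filter_upwards [eventually_gt_atTop 0] with r hr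
      have : a + r ≠ 0 := by positivity
      simp only [id]
      field_simp
      ring
    have := ((continuousAt_log one_ne_zero).tendsto.comp hratio).div_const (a - c)
    rw [log_one, zero_div] at this
    refine this.congr' ?_
    filter_upwards [eventually_gt_atTop 0] with r hr
    rw [Function.comp_apply, log_div (by positivity) (by positivity)]
  rw [integral_Ioi_of_hasDerivAt_of_nonneg (hF 0 self_mem_Ici).continuousAt.continuousWithinAt
    (fun r hr => hF r (Ioi_subset_Ici_self hr)) (fun r (hr : 0 < r) => by positivity) hlim]
  simp only [F, add_zero]
  ring

theorem Matrix.trace_fromBlocks_s9 {n m R : Type*} [Fintype n] [Fintype m] [AddCommMonoid R]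
    (A : Matrix n n R) (B : Matrix n m R) (C : Matrix m n R) (D : Matrix m m R) :
    (fromBlocks A B C D).trace = A.trace + D.trace := by
  simp [trace, Fintype.sum_sum_type]

section ScalarMatrix

variable {n : Type*} [Fintype n] [DecidableEq n]

theorem Matrix.inv_real_smul_one {x : ℝ} (hx : x ≠ 0) :
    (x • (1 : Matrix n n ℂ))⁻¹ = x⁻¹ • 1 :=
  inv_eq_left_inv (by rw [smul_mul_smul, one_mul, inv_mul_cancel₀ hx, one_smul])

theorem Matrix.IsHermitian.eigenvalues_real_smul_one {a : ℝ}
    (h : (a • (1 : Matrix n n ℂ)).IsHermitian) (i : n) : h.eigenvalues i = a := by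
  have : Nonempty n := ⟨i⟩
  have hmem : h.eigenvalues i ∈ spectrum ℝ (algebraMap ℝ (Matrix n n ℂ) a) := by
    rw [Algebra.algebraMap_eq_smul_one]
    exact h.eigenvalues_mem_spectrum_real i
  rwa [spectrum.scalar_eq, mem_singleton_iff] at hmem

theorem Matrix.posSemidef_fromBlocks_real_smul_one {a b c : ℝ} (ha : 0 < a)
    (hb : b ^ 2 ≤ a * c) :
    (fromBlocks (a • 1) (b • 1) (b • 1)ᴴ (c • 1) : Matrix (n ⊕ n) (n ⊕ n) ℂ).PosSemidef := by
  have hA : (a • (1 : Matrix n n ℂ)).PosDef := PosDef.one.smul ha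
  let := hA.isUnit.invertible
  rw [hA.fromBlocks₁₁, inv_real_smul_one ha.ne']
  have hschur : 0 ≤ c - b * a⁻¹ * b := by
    rw [sub_nonneg, mul_right_comm, ← sq, ← div_eq_mul_inv, div_le_iff₀' ha]
    exact hb
  have hschur_eq :
      c • (1 : Matrix n n ℂ) - (b • 1)ᴴ * a⁻¹ • 1 * b • 1 = (c - b * a⁻¹ * b) • 1 := by
    rw [conjTranspose_smul, conjTranspose_one, star_trivial, smul_mul_smul, smul_mul_smul,
      one_mul, one_mul, sub_smul]
  rw [hschur_eq]
  exact PosSemidef.one.smul hschur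

end ScalarMatrix

theorem Omega_real_smul_one {dP dQ : ℕ} {a c : ℝ} (ha : 0 < a) (hc : 0 < c) (hac : a ≠ c)
    (B : Matrix (Fin dP) (Fin dQ) ℂ) :
    Omega (a • 1) (c • 1) B = ((log a - log c) / (a - c)) • B := by
  have hintegrand : EqOn
      (fun r : ℝ => (a • (1 : Matrix (Fin dP) (Fin dP) ℂ) + r • 1)⁻¹ * B *
        (c • (1 : Matrix (Fin dQ) (Fin dQ) ℂ) + r • 1)⁻¹)
      (fun r => ((a + r) * (c + r))⁻¹ • B) (Ioi 0) := by
    intro r (hr : 0 < r)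
    simp only
    rw [← add_smul, ← add_smul, inv_real_smul_one (by positivity),
      inv_real_smul_one (by positivity), Matrix.smul_mul, Matrix.smul_mul, Matrix.one_mul,
      Matrix.mul_smul, Matrix.mul_one, smul_smul, mul_inv, mul_comm]
  rw [Omega, setIntegral_congr_fun measurableSet_Ioi hintegrand, integral_smul_const,
    integral_Ioi_inv_add_mul_inv_add ha hc hac]

theorem re_trace_conjTranspose_mul_Omega_real_smul_one {dP dQ : ℕ} {a c : ℝ} (ha : 0 < a)
    (hc : 0 < c) (hac : a ≠ c) (B : Matrix (Fin dP) (Fin dQ) ℂ) :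
    (Bᴴ * Omega (a • 1) (c • 1) B).trace.re = (Bᴴ * B).trace.re * log (a / c) / (a - c) := by
  rw [Omega_real_smul_one ha hc hac, Matrix.mul_smul, trace_smul, Complex.real_smul,
    Complex.re_ofReal_mul, log_div ha.ne' hc.ne']
  ring

/-- Operator–scalar separation: for every `K > 1` there is a finite-dimensional
density matrix `ρ = [[A,B],[B*,C]]` with `A, C` positive definite, `B ≠ 0`,
`0 < Tr C < λ_min(A)`, and
`Tr[B* Ω_{A,C}⁻¹(B)] ≥ K ‖B‖_F² log(λ_min(A)/Tr C)`. -/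
theorem bkm_operator_scalar_separation (K : ℝ) (hK : 1 < K) :
    ∃ (dP dQ : ℕ) (A : Matrix (Fin dP) (Fin dP) ℂ)
      (C : Matrix (Fin dQ) (Fin dQ) ℂ) (B : Matrix (Fin dP) (Fin dQ) ℂ)
      (hA : A.PosDef) (_hC : C.PosDef),
      1 ≤ dP ∧ 1 ≤ dQ ∧ B ≠ 0 ∧
      (fromBlocks A B Bᴴ C).PosSemidef ∧ (fromBlocks A B Bᴴ C).trace = 1 ∧
      0 < (C.trace).re ∧ (C.trace).re < ⨅ i, hA.1.eigenvalues i ∧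
      ((Bᴴ * Omega A C B).trace).re ≥
        K * ((Bᴴ * B).trace).re *
          Real.log ((⨅ i, hA.1.eigenvalues i) / (C.trace).re) := by
  have hε : K⁻¹ < 1 := inv_lt_one_of_one_lt₀ hK
  have hε₀ : 0 < K⁻¹ := by positivity
  set a : ℝ := (1 + K⁻¹) / 2
  set c : ℝ := (1 - K⁻¹) / 2
  have ha : 0 < a := by positivity
  have hc : 0 < c := by simp only [c]; linarith
  have hca : c < a := by simp only [a, c]; linarith
  have hA : (a • (1 : Matrix (Fin 1) (Fin 1) ℂ)).PosDef := PosDef.one.smul ha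
  have heig : ⨅ i, hA.1.eigenvalues i = a := by simp [hA.1.eigenvalues_real_smul_one]
  have htr (x : ℝ) : (x • (1 : Matrix (Fin 1) (Fin 1) ℂ)).trace = x := by simp
  refine ⟨1, 1, a • 1, c • 1, √(a * c) • 1, hA, PosDef.one.smul hc, le_rfl, le_rfl,
    smul_ne_zero (by positivity) one_ne_zero,
    posSemidef_fromBlocks_real_smul_one ha (sq_sqrt (by positivity)).le, ?_, by simpa [htr],
    by rwa [htr, heig, Complex.ofReal_re], ?_⟩
  · have hsum : a + c = 1 := by simp only [a, c]; ring
    rw [trace_fromBlocks_s9, htr, htr, ← Complex.ofReal_add, hsum, Complex.ofReal_one]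
  · rw [re_trace_conjTranspose_mul_Omega_real_smul_one ha hc hca.ne', heig, htr,
      Complex.ofReal_re, show a - c = K⁻¹ by simp only [a, c]; ring, div_inv_eq_mul]
    exact ge_of_eq (by ring)
end
end

section
/- Fix a, ε > 0. The function x ↦ Φ(a, ε, x) is strictly increasing and strictly convex on [0, aε), and Φ(a, ε, 0) = 0. -/
/-!
Write `λ±` for the eigenvalues and `g = λ₊ - λ₋ = √((a-ε)² + 4x)` for their gap. Then
`dλ±/dx = ±1/g` and `dg/dx = 2/g`, so `Φ' = (log λ₊ - log λ₋)/g > 0` and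
`Φ'' = (λ₊⁻¹ + λ₋⁻¹ - 2Φ')/g²`. The second derivative is positive because the logarithmic mean
`(λ₊ - λ₋)/(log λ₊ - log λ₋)` exceeds the harmonic mean `2/(λ₊⁻¹ + λ₋⁻¹)`; with `t = λ₊/λ₋`
this is `2 log t < t - t⁻¹ = 2 sinh (log t)`. At `x = 0` the eigenvalues are `a` and `ε`.
-/

noncomputable section

/-- The two-level entropy functional
`Φ(a,ε,x) = λ₊ log λ₊ + λ₋ log λ₋ − a log a − ε log ε`, where
`λ± = (a + ε ± √((a−ε)² + 4x))/2` (with `0 log 0 = 0` via `Real.log 0 = 0`). -/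
def Phi (a ε x : ℝ) : ℝ :=
  ((a + ε + Real.sqrt ((a - ε) ^ 2 + 4 * x)) / 2) *
      Real.log ((a + ε + Real.sqrt ((a - ε) ^ 2 + 4 * x)) / 2) +
    ((a + ε - Real.sqrt ((a - ε) ^ 2 + 4 * x)) / 2) *
      Real.log ((a + ε - Real.sqrt ((a - ε) ^ 2 + 4 * x)) / 2) -
    a * Real.log a - ε * Real.log ε

open Real Set

theorem Real.two_mul_log_lt_sub_inv {t : ℝ} (ht : 1 < t) : 2 * log t < t - t⁻¹ := by
  have h := self_lt_sinh_iff.mpr (log_pos ht)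
  rw [sinh_eq, exp_neg, exp_log (by linarith)] at h
  linarith

theorem Real.two_mul_log_sub_log_lt_sub_mul_inv_add_inv {u v : ℝ} (hv : 0 < v) (hvu : v < u) :
    2 * (log u - log v) < (u - v) * (u⁻¹ + v⁻¹) := by
  have hu : 0 < u := hv.trans hvu
  have h := two_mul_log_lt_sub_inv ((one_lt_div hv).mpr hvu)
  rw [log_div hu.ne' hv.ne', inv_div] at h
  convert h using 1
  field_simp
  ring

namespace Phi

variable {a ε x : ℝ}

def gap (a ε x : ℝ) : ℝ := √((a - ε) ^ 2 + 4 * x)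

def lamPlus (a ε x : ℝ) : ℝ := (a + ε + gap a ε x) / 2

def lamMinus (a ε x : ℝ) : ℝ := (a + ε - gap a ε x) / 2

def derivative (a ε x : ℝ) : ℝ := (log (lamPlus a ε x) - log (lamMinus a ε x)) / gap a ε x

theorem eq_lamPlus_lamMinus (a ε : ℝ) : Phi a ε = fun x ↦
    lamPlus a ε x * log (lamPlus a ε x) + lamMinus a ε x * log (lamMinus a ε x) -
      a * log a - ε * log ε := rfl

theorem gap_pos (hx : 0 < x) : 0 < gap a ε x := sqrt_pos.mpr (by positivity)

theorem lamPlus_sub_lamMinus : lamPlus a ε x - lamMinus a ε x = gap a ε x := by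
  unfold lamPlus lamMinus; ring

theorem lamPlus_pos (hs : 0 < a + ε) : 0 < lamPlus a ε x := by
  have : 0 ≤ gap a ε x := sqrt_nonneg _
  unfold lamPlus; linarith

theorem lamMinus_pos (hs : 0 < a + ε) (hx : x < a * ε) : 0 < lamMinus a ε x := by
  have : gap a ε x < a + ε := (sqrt_lt' hs).mpr (by nlinarith)
  unfold lamMinus; linarith

theorem lamMinus_lt_lamPlus (hx : 0 < x) : lamMinus a ε x < lamPlus a ε x := by
  have := gap_pos (a := a) (ε := ε) hx
  unfold lamPlus lamMinus; linarith

theorem hasDerivAt_gap (hx : 0 < x) : HasDerivAt (gap a ε) (2 / gap a ε x) x := by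
  have h : HasDerivAt (fun y ↦ (a - ε) ^ 2 + 4 * y) 4 x := by
    simpa using ((hasDerivAt_id x).const_mul 4).const_add ((a - ε) ^ 2)
  unfold gap
  convert h.sqrt (by positivity) using 1
  ring

theorem hasDerivAt_lamPlus (hx : 0 < x) : HasDerivAt (lamPlus a ε) (gap a ε x)⁻¹ x := by
  have h := ((hasDerivAt_gap (a := a) (ε := ε) hx).const_add (a + ε)).div_const 2
  rw [div_div_cancel_left' two_ne_zero] at h
  exact h

theorem hasDerivAt_lamMinus (hx : 0 < x) : HasDerivAt (lamMinus a ε) (-(gap a ε x)⁻¹) x := by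
  have h := ((hasDerivAt_gap (a := a) (ε := ε) hx).const_sub (a + ε)).div_const 2
  rw [neg_div, div_div_cancel_left' two_ne_zero] at h
  exact h

protected theorem continuous (a ε : ℝ) : Continuous (Phi a ε) := by
  rw [eq_lamPlus_lamMinus]
  unfold lamPlus lamMinus gap
  fun_prop

theorem hasDerivAt (hs : 0 < a + ε) (hx₀ : 0 < x) (hx : x < a * ε) :
    HasDerivAt (Phi a ε) (derivative a ε x) x := by
  have hp := (hasDerivAt_mul_log (lamPlus_pos hs).ne').comp x (hasDerivAt_lamPlus hx₀)
  have hm := (hasDerivAt_mul_log (lamMinus_pos hs hx).ne').comp x (hasDerivAt_lamMinus hx₀)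
  rw [eq_lamPlus_lamMinus]
  exact ((hp.add hm).sub_const (a * log a)).sub_const (ε * log ε) |>.congr_deriv
    (by unfold derivative; ring)

theorem derivative_pos (hs : 0 < a + ε) (hx₀ : 0 < x) (hx : x < a * ε) :
    0 < derivative a ε x :=
  div_pos (sub_pos.mpr (log_lt_log (lamMinus_pos hs hx) (lamMinus_lt_lamPlus hx₀))) (gap_pos hx₀)

theorem hasDerivAt_derivative (hs : 0 < a + ε) (hx₀ : 0 < x) (hx : x < a * ε) :
    HasDerivAt (derivative a ε)
      (((lamPlus a ε x)⁻¹ + (lamMinus a ε x)⁻¹ - 2 * derivative a ε x) / gap a ε x ^ 2) x := by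
  have hg := (gap_pos (a := a) (ε := ε) hx₀).ne'
  have hN := ((hasDerivAt_lamPlus hx₀).log (lamPlus_pos hs).ne').sub
    ((hasDerivAt_lamMinus hx₀).log (lamMinus_pos hs hx).ne')
  exact (hN.div (hasDerivAt_gap hx₀) hg).congr_deriv
    (by simp only [derivative, Pi.sub_apply]; field_simp; ring)

theorem two_mul_derivative_lt (hs : 0 < a + ε) (hx₀ : 0 < x) (hx : x < a * ε) :
    2 * derivative a ε x < (lamPlus a ε x)⁻¹ + (lamMinus a ε x)⁻¹ := by
  have h := two_mul_log_sub_log_lt_sub_mul_inv_add_inv (lamMinus_pos hs hx)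
    (lamMinus_lt_lamPlus hx₀)
  rw [lamPlus_sub_lamMinus] at h
  rw [derivative, mul_div_assoc', div_lt_iff₀ (gap_pos hx₀)]
  linarith

theorem derivative_strictMonoOn (hs : 0 < a + ε) :
    StrictMonoOn (derivative a ε) (Ioo 0 (a * ε)) := by
  refine strictMonoOn_of_deriv_pos (convex_Ioo _ _)
    (fun x hx ↦ (hasDerivAt_derivative hs hx.1 hx.2).continuousAt.continuousWithinAt)
    fun x hx ↦ ?_
  rw [interior_Ioo] at hx
  rw [(hasDerivAt_derivative hs hx.1 hx.2).deriv]
  exact div_pos (sub_pos.mpr (two_mul_derivative_lt hs hx.1 hx.2)) (pow_pos (gap_pos hx.1) 2)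

theorem apply_zero (a ε : ℝ) : Phi a ε 0 = 0 := by
  have hg : gap a ε 0 = |a - ε| := by simp [gap, sqrt_sq_eq_abs]
  simp only [eq_lamPlus_lamMinus, lamPlus, lamMinus, hg]
  rcases le_total ε a with h | h
  · rw [abs_of_nonneg (sub_nonneg.2 h)]
    ring_nf
  · rw [abs_of_nonpos (sub_nonpos.2 h)]
    ring_nf

end Phi

/-- `x ↦ Φ(a,ε,x)` is strictly increasing and strictly convex on `[0, aε)`,
with `Φ(a,ε,0) = 0`. -/
theorem Phi_strictMono_strictConvex (a ε : ℝ) (ha : 0 < a) (hε : 0 < ε) :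
    StrictMonoOn (Phi a ε) (Set.Ico 0 (a * ε)) ∧
      StrictConvexOn ℝ (Set.Ico 0 (a * ε)) (Phi a ε) ∧
      Phi a ε 0 = 0 := by
  have hs : 0 < a + ε := add_pos ha hε
  have hderiv : EqOn (deriv (Phi a ε)) (Phi.derivative a ε) (Ioo 0 (a * ε)) :=
    fun x hx ↦ (Phi.hasDerivAt hs hx.1 hx.2).deriv
  refine ⟨?_, ?_, Phi.apply_zero a ε⟩
  · refine strictMonoOn_of_deriv_pos (convex_Ico _ _) (Phi.continuous a ε).continuousOn
      fun x hx ↦ ?_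
    rw [interior_Ico] at hx
    rw [hderiv hx]
    exact Phi.derivative_pos hs hx.1 hx.2
  · refine StrictMonoOn.strictConvexOn_of_deriv (convex_Ico _ _)
      (Phi.continuous a ε).continuousOn ?_
    rw [interior_Ico]
    exact (Phi.derivative_strictMonoOn hs).congr hderiv.symm
end
end

section
/- Fix a, ε > 0. Then Φ(a, ε, x)/x tends to L(a, ε) as x → 0⁺; equivalently, the right derivative of x ↦ Φ(a, ε, x) at x = 0 equals L(a, ε). -/
noncomputable section

/-!
One has `λ₊ - λ₋ = √((a - ε)² + 4x)` and `λ±' = ±1/(λ₊ - λ₋)`, so for `0 < x < aε` the derivative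
of `Φ` is `(log λ₊ - log λ₋)/(λ₊ - λ₋) = L(λ₊, λ₋)`. As `x → 0⁺`, `(λ₊, λ₋) → (max a ε, min a ε)`,
and `L` is continuous on the open positive quadrant, across the diagonal too because `L(a, c)`
lies between `1/a` and `1/c`. Since `Φ` is continuous with `Φ(0) = 0`, this limit of the
derivative is the right derivative at `0`, i.e. the limit of `Φ(x)/x`.
-/

open Real Filter Set Topology

section Lmean

lemma Lmean_of_ne {a c : ℝ} (h : a ≠ c) : Lmean a c = (log a - log c) / (a - c) :=
  if_neg h

lemma Lmean_comm (a c : ℝ) : Lmean a c = Lmean c a := by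
  rcases eq_or_ne a c with rfl | h
  · rfl
  rw [Lmean_of_ne h, Lmean_of_ne h.symm, ← neg_sub a c, ← neg_sub (log a), neg_div_neg_eq]

lemma Lmean_max_min (a c : ℝ) : Lmean (max a c) (min a c) = Lmean a c := by
  rcases le_total a c with h | h
  · rw [max_eq_right h, min_eq_left h, Lmean_comm]
  · rw [max_eq_left h, min_eq_right h]

lemma Lmean_mem_Icc_of_lt {a c : ℝ} (hc : 0 < c) (hca : c < a) :
    Lmean a c ∈ Icc a⁻¹ c⁻¹ := by
  have ha : 0 < a := hc.trans hca
  have hac : 0 < a - c := sub_pos.2 hca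
  have hlog : log a - log c = log (a / c) := (log_div ha.ne' hc.ne').symm
  have hupper := log_le_sub_one_of_pos (div_pos ha hc)
  have hlower := one_sub_inv_le_log_of_pos (div_pos ha hc)
  rw [Lmean_of_ne hca.ne', hlog]
  constructor
  · rw [le_div_iff₀ hac]
    calc a⁻¹ * (a - c) = 1 - (a / c)⁻¹ := by field_simp
      _ ≤ log (a / c) := hlower
  · rw [div_le_iff₀ hac]
    calc log (a / c) ≤ a / c - 1 := hupper
      _ = c⁻¹ * (a - c) := by field_simp

lemma Lmean_mem_uIcc {a c : ℝ} (ha : 0 < a) (hc : 0 < c) : Lmean a c ∈ uIcc a⁻¹ c⁻¹ := by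
  rcases lt_trichotomy c a with h | rfl | h
  · exact Icc_subset_uIcc (Lmean_mem_Icc_of_lt hc h)
  · simp [Lmean]
  · rw [Lmean_comm]
    exact Icc_subset_uIcc' (Lmean_mem_Icc_of_lt ha h)

lemma continuousAt_Lmean {a c : ℝ} (ha : 0 < a) (hc : 0 < c) :
    ContinuousAt (Function.uncurry Lmean) (a, c) := by
  rcases eq_or_ne a c with rfl | h
  · have hpos : ∀ᶠ p : ℝ × ℝ in 𝓝 (a, a), 0 < p.1 ∧ 0 < p.2 :=
      (continuous_fst.tendsto _).eventually (lt_mem_nhds ha) |>.and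
        ((continuous_snd.tendsto _).eventually (lt_mem_nhds ha))
    have hinv : ContinuousAt (fun p : ℝ × ℝ => (p.1⁻¹, p.2⁻¹)) (a, a) := by
      fun_prop (disch := exact ha.ne')
    have hmin := (continuous_min.continuousAt.comp hinv).tendsto
    have hmax := (continuous_max.continuousAt.comp hinv).tendsto
    simp only [Function.comp_def, min_self, max_self] at hmin hmax
    show Tendsto (Function.uncurry Lmean) (𝓝 (a, a)) (𝓝 (Lmean a a))
    rw [show Lmean a a = a⁻¹ by simp [Lmean]]
    refine tendsto_of_tendsto_of_tendsto_of_le_of_le' hmin hmax ?_ ?_ <;>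
      filter_upwards [hpos] with p hp
    exacts [(Lmean_mem_uIcc hp.1 hp.2).1, (Lmean_mem_uIcc hp.1 hp.2).2]
  · have hne : ∀ᶠ p : ℝ × ℝ in 𝓝 (a, c), p.1 ≠ p.2 :=
      isOpen_ne_fun continuous_fst continuous_snd |>.mem_nhds h
    refine ContinuousAt.congr ?_ (hne.mono fun p hp => (Lmean_of_ne hp).symm)
    fun_prop (disch := first | exact ha.ne' | exact hc.ne' | exact sub_ne_zero.2 h)

end Lmean

section Eigenvalues

variable (a ε : ℝ)

def lambdaPlus (x : ℝ) : ℝ := (a + ε + √((a - ε) ^ 2 + 4 * x)) / 2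

def lambdaMinus (x : ℝ) : ℝ := (a + ε - √((a - ε) ^ 2 + 4 * x)) / 2

lemma Phi_eq_lambda :
    Phi a ε = fun x => lambdaPlus a ε x * log (lambdaPlus a ε x) +
      lambdaMinus a ε x * log (lambdaMinus a ε x) - a * log a - ε * log ε :=
  rfl

lemma lambdaPlus_sub_lambdaMinus (x : ℝ) :
    lambdaPlus a ε x - lambdaMinus a ε x = √((a - ε) ^ 2 + 4 * x) := by
  simp only [lambdaPlus, lambdaMinus]
  ring

lemma lambdaPlus_zero : lambdaPlus a ε 0 = max a ε := by
  rcases le_total a ε with h | h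
  · rw [lambdaPlus, mul_zero, add_zero, ← sq_abs, sqrt_sq (abs_nonneg _),
      abs_of_nonpos (sub_nonpos.2 h), max_eq_right h]
    ring
  · rw [lambdaPlus, mul_zero, add_zero, sqrt_sq (sub_nonneg.2 h), max_eq_left h]
    ring

lemma lambdaMinus_zero : lambdaMinus a ε 0 = min a ε := by
  rcases le_total a ε with h | h
  · rw [lambdaMinus, mul_zero, add_zero, ← sq_abs, sqrt_sq (abs_nonneg _),
      abs_of_nonpos (sub_nonpos.2 h), min_eq_left h]
    ring
  · rw [lambdaMinus, mul_zero, add_zero, sqrt_sq (sub_nonneg.2 h), min_eq_right h]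
    ring

lemma Phi_zero : Phi a ε 0 = 0 := by
  simp only [Phi_eq_lambda, lambdaPlus_zero, lambdaMinus_zero]
  rcases le_total a ε with h | h
  · rw [max_eq_right h, min_eq_left h]
    ring
  · rw [max_eq_left h, min_eq_right h]
    ring

lemma continuous_Phi : Continuous (Phi a ε) := by
  have hplus : Continuous fun x => lambdaPlus a ε x * log (lambdaPlus a ε x) :=
    continuous_mul_log.comp (by unfold lambdaPlus; fun_prop)
  have hminus : Continuous fun x => lambdaMinus a ε x * log (lambdaMinus a ε x) :=
    continuous_mul_log.comp (by unfold lambdaMinus; fun_prop)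
  rw [Phi_eq_lambda]
  fun_prop

variable {a ε}

lemma lambdaMinus_pos (ha : 0 < a) (hε : 0 < ε) {x : ℝ} (hx : x < a * ε) :
    0 < lambdaMinus a ε x := by
  have hsqrt : √((a - ε) ^ 2 + 4 * x) < a + ε := by
    rw [sqrt_lt' (by positivity)]
    nlinarith
  rw [lambdaMinus]
  linarith

lemma lambdaMinus_lt_lambdaPlus {x : ℝ} (hx : 0 < (a - ε) ^ 2 + 4 * x) :
    lambdaMinus a ε x < lambdaPlus a ε x := by
  rw [← sub_pos, lambdaPlus_sub_lambdaMinus]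
  exact sqrt_pos.2 hx

lemma hasDerivAt_lambdaPlus {x : ℝ} (hx : 0 < (a - ε) ^ 2 + 4 * x) :
    HasDerivAt (lambdaPlus a ε) (√((a - ε) ^ 2 + 4 * x))⁻¹ x := by
  have h := (((hasDerivAt_id' x).const_mul 4).const_add ((a - ε) ^ 2)).sqrt hx.ne'
  refine ((h.const_add (a + ε)).div_const 2).congr_deriv ?_
  have := (sqrt_pos.2 hx).ne'
  field_simp
  ring

lemma hasDerivAt_lambdaMinus {x : ℝ} (hx : 0 < (a - ε) ^ 2 + 4 * x) :
    HasDerivAt (lambdaMinus a ε) (-(√((a - ε) ^ 2 + 4 * x))⁻¹) x := by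
  have h := (((hasDerivAt_id' x).const_mul 4).const_add ((a - ε) ^ 2)).sqrt hx.ne'
  refine ((h.const_sub (a + ε)).div_const 2).congr_deriv ?_
  have := (sqrt_pos.2 hx).ne'
  field_simp
  ring

lemma hasDerivAt_Phi (ha : 0 < a) (hε : 0 < ε) {x : ℝ} (hx₀ : 0 < x) (hx : x < a * ε) :
    HasDerivAt (Phi a ε) (Lmean (lambdaPlus a ε x) (lambdaMinus a ε x)) x := by
  have hdisc : 0 < (a - ε) ^ 2 + 4 * x := by positivity
  have hminus := lambdaMinus_pos ha hε hx
  have hlt := lambdaMinus_lt_lambdaPlus hdisc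
  have hP := (hasDerivAt_mul_log (hminus.trans hlt).ne').comp x (hasDerivAt_lambdaPlus hdisc)
  have hM := (hasDerivAt_mul_log hminus.ne').comp x (hasDerivAt_lambdaMinus hdisc)
  rw [Phi_eq_lambda]
  refine (((hP.add hM).sub_const (a * log a)).sub_const (ε * log ε)).congr_deriv ?_
  rw [Lmean_of_ne hlt.ne', lambdaPlus_sub_lambdaMinus]
  ring

lemma tendsto_Lmean_lambda (ha : 0 < a) (hε : 0 < ε) :
    Tendsto (fun x => Lmean (lambdaPlus a ε x) (lambdaMinus a ε x)) (𝓝 0) (𝓝 (Lmean a ε)) := by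
  have hpair : ContinuousAt (fun x => (lambdaPlus a ε x, lambdaMinus a ε x)) 0 := by
    unfold lambdaPlus lambdaMinus
    fun_prop
  have hplus : 0 < lambdaPlus a ε 0 := (lambdaPlus_zero a ε).symm ▸ lt_max_of_lt_left ha
  have hminus : 0 < lambdaMinus a ε 0 := lambdaMinus_pos ha hε (by positivity)
  rw [← Lmean_max_min, ← lambdaPlus_zero, ← lambdaMinus_zero]
  exact (continuousAt_Lmean hplus hminus).tendsto.comp hpair.tendsto

end Eigenvalues

/-- `Φ(a,ε,x)/x → L(a,ε)` as `x → 0⁺`; equivalently the right derivative of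
`x ↦ Φ(a,ε,x)` at `0` is `L(a,ε)`. -/
theorem Phi_div_tendsto_Lmean (a ε : ℝ) (ha : 0 < a) (hε : 0 < ε) :
    Filter.Tendsto (fun x : ℝ => Phi a ε x / x)
      (nhdsWithin 0 (Set.Ioi 0)) (nhds (Lmean a ε)) ∧
    HasDerivWithinAt (Phi a ε) (Lmean a ε) (Set.Ici 0) 0 := by
  have hderiv : HasDerivWithinAt (Phi a ε) (Lmean a ε) (Ici 0) 0 := by
    have hs : Ioo 0 (a * ε) ∈ 𝓝[>] (0 : ℝ) := Ioo_mem_nhdsGT (by positivity)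
    refine hasDerivWithinAt_Ici_of_tendsto_deriv
      (fun x hx => (hasDerivAt_Phi ha hε hx.1 hx.2).differentiableAt.differentiableWithinAt)
      (continuous_Phi a ε).continuousWithinAt hs ?_
    refine ((tendsto_Lmean_lambda ha hε).mono_left nhdsWithin_le_nhds).congr' ?_
    filter_upwards [hs] with x hx
    exact (hasDerivAt_Phi ha hε hx.1 hx.2).deriv.symm
  refine ⟨?_, hderiv⟩
  rw [← hasDerivWithinAt_Ioi_iff_Ici, hasDerivWithinAt_iff_tendsto_slope' self_notMem_Ioi] at hderiv
  simpa [slope_fun_def_field, Phi_zero] using hderiv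
end
end

section
/- Suppose 0 < ε < a ≤ 1. Then Φ(a, ε, x) ≥ x · log(a/ε) for all x ∈ [0, aε]. -/
noncomputable section

/-!
Substituting `x = δ (a - ε + δ)` with `δ ∈ [0, ε]` turns the square root into `a - ε + 2δ`, so
`λ₊ = a + δ` and `λ₋ = ε - δ`. The difference of the two sides then vanishes at `δ = 0` and has
derivative `log (a + δ) - log (ε - δ) - (a - ε + 2δ) log (a / ε)`, which is nonnegative because
`log (a + δ) ≥ log a`, `log ε - log (ε - δ) ≥ δ / ε` and `0 ≤ ε log (a / ε) ≤ a - ε ≤ 1`.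
-/

open Real Set

lemma Phi_mul_add_eq {a ε δ : ℝ} (h : 0 ≤ a - ε + 2 * δ) :
    Phi a ε (δ * (a - ε + δ)) =
      (a + δ) * log (a + δ) + (ε - δ) * log (ε - δ) - a * log a - ε * log ε := by
  have hsq : (a - ε) ^ 2 + 4 * (δ * (a - ε + δ)) = (a - ε + 2 * δ) ^ 2 := by ring
  have hplus : (a + ε + (a - ε + 2 * δ)) / 2 = a + δ := by ring
  have hminus : (a + ε - (a - ε + 2 * δ)) / 2 = ε - δ := by ring
  rw [Phi, hsq, sqrt_sq h, hplus, hminus]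

lemma exists_mul_add_eq_of_mem_Icc {a ε x : ℝ} (hε : 0 ≤ ε) (hx : x ∈ Icc 0 (a * ε)) :
    ∃ δ ∈ Icc 0 ε, δ * (a - ε + δ) = x := by
  have hcont : ContinuousOn (fun δ : ℝ => δ * (a - ε + δ)) (Icc 0 ε) := by fun_prop
  have hx' : x ∈ Icc ((0 : ℝ) * (a - ε + 0)) (ε * (a - ε + ε)) := by
    simpa [mul_comm a ε] using hx
  exact intermediate_value_Icc hε hcont hx'

lemma mul_log_div_le_log_sub_log {a ε t : ℝ} (hε : 0 < ε) (hεa : ε ≤ a) (ha : a ≤ 1)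
    (ht : t ∈ Ico 0 ε) :
    (a - ε + 2 * t) * log (a / ε) ≤ log (a + t) - log (ε - t) := by
  obtain ⟨ht0, htε⟩ := ht
  have ha0 : 0 < a := hε.trans_le hεa
  have hL0 : 0 ≤ log (a / ε) := log_nonneg ((one_le_div hε).2 hεa)
  have hL1 : ε * log (a / ε) ≤ 1 := by
    have := log_le_sub_one_of_pos (div_pos ha0 hε)
    have : ε * (a / ε - 1) = a - ε := by field_simp
    nlinarith
  have hlog_a : log a ≤ log (a + t) := log_le_log ha0 (by linarith)
  have hlog_ε : t ≤ ε * (log ε - log (ε - t)) := by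
    have h := one_sub_inv_le_log_of_pos (div_pos hε (sub_pos.2 htε))
    rw [log_div hε.ne' (sub_pos.2 htε).ne', inv_div] at h
    have : ε * (1 - (ε - t) / ε) = t := by field_simp; ring
    nlinarith
  rw [log_div ha0.ne' hε.ne'] at hL0 hL1 ⊢
  rcases le_or_gt (a - ε + 2 * t - 1) 0 with hc | hc
  · nlinarith [mul_nonpos_of_nonpos_of_nonneg hc hL0]
  · nlinarith [mul_le_mul_of_nonneg_left hL1 hc.le]

lemma hasDerivAt_entropy_sub_mul {a ε c t : ℝ} (ha : a + t ≠ 0) (hε : ε - t ≠ 0) :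
    HasDerivAt (fun s => (a + s) * log (a + s) + (ε - s) * log (ε - s) - s * (a - ε + s) * c)
      (log (a + t) - log (ε - t) - (a - ε + 2 * t) * c) t := by
  have hplus := (hasDerivAt_id' t).const_add a
  have hminus := (hasDerivAt_id' t).const_sub ε
  have hquad := ((hasDerivAt_id' t).mul ((hasDerivAt_id' t).const_add (a - ε))).mul_const c
  refine (((hplus.mul (hplus.log ha)).add (hminus.mul (hminus.log hε))).sub hquad).congr_deriv ?_
  field_simp
  ring

lemma mul_log_div_le_entropy_change {a ε δ : ℝ} (hε : 0 < ε) (hεa : ε ≤ a) (ha : a ≤ 1)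
    (hδ : δ ∈ Icc 0 ε) :
    δ * (a - ε + δ) * log (a / ε) ≤
      (a + δ) * log (a + δ) + (ε - δ) * log (ε - δ) - a * log a - ε * log ε := by
  set F : ℝ → ℝ := fun t =>
    (a + t) * log (a + t) + (ε - t) * log (ε - t) - t * (a - ε + t) * log (a / ε) with hF
  have hderiv : ∀ t ∈ interior (Icc 0 ε), HasDerivWithinAt F
      (log (a + t) - log (ε - t) - (a - ε + 2 * t) * log (a / ε)) (interior (Icc 0 ε)) t := by
    intro t ht
    rw [interior_Icc] at ht
    exact (hasDerivAt_entropy_sub_mul (by linarith [ht.1, hεa]) (by linarith [ht.2]))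
      |>.hasDerivWithinAt
  have hmono : MonotoneOn F (Icc 0 ε) :=
    monotoneOn_of_hasDerivWithinAt_nonneg (convex_Icc 0 ε) (by fun_prop) hderiv fun t ht => by
      rw [interior_Icc] at ht
      exact sub_nonneg.2 (mul_log_div_le_log_sub_log hε hεa ha (Ioo_subset_Ico_self ht))
  have := hmono (left_mem_Icc.2 hε.le) hδ hδ.1
  simp only [hF, add_zero, sub_zero, zero_mul] at this
  linarith

/-- For `0 < ε < a ≤ 1`, `Φ(a,ε,x) ≥ x log(a/ε)` for all `x ∈ [0, aε]`. -/
theorem Phi_ge_log_ratio (a ε : ℝ) (hε : 0 < ε) (hεa : ε < a) (ha : a ≤ 1) :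
    ∀ x ∈ Set.Icc (0 : ℝ) (a * ε), Phi a ε x ≥ x * Real.log (a / ε) := by
  intro x hx
  obtain ⟨δ, hδ, rfl⟩ := exists_mul_add_eq_of_mem_Icc hε.le hx
  rw [ge_iff_le, Phi_mul_add_eq (by linarith [hδ.1])]
  exact mul_log_div_le_entropy_change hε hεa.le ha hδ
end
end

section
/- Let a₀ > 0, and for j = 1, …, n let u_j ≥ 0, ε_j ≥ 0, and 0 ≤ x_j ≤ (a₀ + u_j)ε_j, and let ε_rem ≥ 0. Set a_j := a₀ + u_j, A := a₀ + Σ_j u_j, E := ε_rem + Σ_j ε_j, X := Σ_j x_j, and assume X ≤ A·E. Then Σ_j Φ(a_j, ε_j, x_j) ≥ Φ(A, E, X). -/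
/-!
Differentiating `τ ↦ a log (a + τ) + ε log (ε + τ) − λ₊ log (λ₊ + τ) − λ₋ log (λ₋ + τ)`, which
tends to `0` at infinity because `λ₊ + λ₋ = a + ε`, gives `Φ(a, ε, x) = ∫₀^∞ ψ(a, ε, x, t) dt` with
`ψ = t (1/(a+t) + 1/(ε+t)) · x / ((a+t)(ε+t) − x)`, using `λ₊λ₋ = aε − x`. The integrand is
antitone in `a` and in `ε`, and for fixed `a` it is subadditive in the pair `(ε, x)`: the merged
denominator `(a+t)(ε₁+ε₂+t) − x₁ − x₂` dominates each `(a+t)(εᵢ+t) − xᵢ`, since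
`(a+t)ε_{3-i} ≥ x_{3-i}`. Raising every `a_j` to `A`, merging, and adding `ε_rem` thus only
decreases `ψ` pointwise, and integrating gives the claim.
-/

noncomputable section

open Real Set Filter Topology MeasureTheory

def phiIntegrand (a ε x t : ℝ) : ℝ :=
  t * ((a + t)⁻¹ + (ε + t)⁻¹) * (x / ((a + t) * (ε + t) - x))

section phiIntegrand

variable {a ε x t : ℝ}

lemma phiIntegrand_nonneg (ha : 0 ≤ a) (hε : 0 ≤ ε) (hx₀ : 0 ≤ x) (hx : x ≤ a * ε)
    (ht : 0 ≤ t) : 0 ≤ phiIntegrand a ε x t := by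
  have hd : 0 ≤ (a + t) * (ε + t) - x := by nlinarith
  unfold phiIntegrand
  positivity

lemma phiIntegrand_le_of_le_left {a' : ℝ} (ha : 0 ≤ a) (haa' : a ≤ a') (hε : 0 ≤ ε)
    (hx₀ : 0 ≤ x) (hx : x ≤ a * ε) (ht : 0 < t) :
    phiIntegrand a' ε x t ≤ phiIntegrand a ε x t := by
  have hd : 0 < (a + t) * (ε + t) - x := by nlinarith
  have hd' : (a + t) * (ε + t) - x ≤ (a' + t) * (ε + t) - x := by nlinarith
  unfold phiIntegrand
  gcongr
  exact div_nonneg hx₀ (hd.trans_le hd').le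

lemma phiIntegrand_add_le {ε₁ ε₂ x₁ x₂ : ℝ} (ha : 0 ≤ a) (hε₁ : 0 ≤ ε₁) (hε₂ : 0 ≤ ε₂)
    (hx₁₀ : 0 ≤ x₁) (hx₂₀ : 0 ≤ x₂) (hx₁ : x₁ ≤ a * ε₁) (hx₂ : x₂ ≤ a * ε₂) (ht : 0 < t) :
    phiIntegrand a (ε₁ + ε₂) (x₁ + x₂) t ≤ phiIntegrand a ε₁ x₁ t + phiIntegrand a ε₂ x₂ t := by
  have hd₁ : (a + t) * t ≤ (a + t) * (ε₁ + t) - x₁ := by nlinarith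
  have hd₂ : (a + t) * t ≤ (a + t) * (ε₂ + t) - x₂ := by nlinarith
  have h₁ : (a + t) * (ε₁ + t) - x₁ ≤ (a + t) * (ε₁ + ε₂ + t) - (x₁ + x₂) := by linarith
  have h₂ : (a + t) * (ε₂ + t) - x₂ ≤ (a + t) * (ε₁ + ε₂ + t) - (x₁ + x₂) := by linarith
  have hat : 0 < (a + t) * t := by positivity
  have hd : 0 < (a + t) * (ε₁ + ε₂ + t) - (x₁ + x₂) := by linarith
  unfold phiIntegrand
  rw [add_div, mul_add]
  refine add_le_add ?_ ?_ <;> gcongr <;> linarith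

lemma phiIntegrand_zero_right (a ε t : ℝ) : phiIntegrand a ε 0 t = 0 := by
  simp [phiIntegrand]

lemma phiIntegrand_add_left_le {δ : ℝ} (ha : 0 ≤ a) (hε : 0 ≤ ε) (hδ : 0 ≤ δ)
    (hx₀ : 0 ≤ x) (hx : x ≤ a * ε) (ht : 0 < t) :
    phiIntegrand a (δ + ε) x t ≤ phiIntegrand a ε x t := by
  simpa [phiIntegrand_zero_right] using
    phiIntegrand_add_le ha hδ hε le_rfl hx₀ (by positivity) hx ht

lemma phiIntegrand_sum_le {ι : Type*} (s : Finset ι) {ε x : ι → ℝ} (ha : 0 ≤ a)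
    (hε : ∀ i ∈ s, 0 ≤ ε i) (hx₀ : ∀ i ∈ s, 0 ≤ x i) (hx : ∀ i ∈ s, x i ≤ a * ε i)
    (ht : 0 < t) :
    phiIntegrand a (∑ i ∈ s, ε i) (∑ i ∈ s, x i) t ≤ ∑ i ∈ s, phiIntegrand a (ε i) (x i) t := by
  induction s using Finset.cons_induction with
  | empty => simp [phiIntegrand_zero_right]
  | cons i s his ih =>
    simp only [Finset.forall_mem_cons] at hε hx₀ hx
    simp only [Finset.sum_cons]
    have hsum : ∑ j ∈ s, x j ≤ a * ∑ j ∈ s, ε j :=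
      Finset.mul_sum s ε a ▸ Finset.sum_le_sum hx.2
    grw [phiIntegrand_add_le ha hε.1 (Finset.sum_nonneg hε.2) hx₀.1 (Finset.sum_nonneg hx₀.2)
      hx.1 hsum ht, ih hε.2 hx₀.2 hx.2]

end phiIntegrand

lemma continuousWithinAt_mul_log_add {c : ℝ} (hc : 0 ≤ c) :
    ContinuousWithinAt (fun τ ↦ c * log (c + τ)) (Ici 0) 0 := by
  rcases hc.eq_or_lt with rfl | hc
  · simpa using continuousWithinAt_const
  · exact ((continuousAt_const.add continuousAt_id).log (by simpa using hc.ne')).const_mul c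
      |>.continuousWithinAt

lemma tendsto_mul_log_add_div_atTop (c : ℝ) :
    Tendsto (fun τ ↦ c * log ((c + τ) / τ)) atTop (𝓝 0) := by
  have h : Tendsto (fun τ ↦ 1 + c * τ⁻¹) atTop (𝓝 1) := by
    simpa using (tendsto_inv_atTop_zero.const_mul c).const_add 1
  have h' : Tendsto (fun τ ↦ (c + τ) / τ) atTop (𝓝 1) := by
    refine h.congr' ?_
    filter_upwards [eventually_gt_atTop 0] with τ hτ
    field_simp
    ring
  simpa using ((continuousAt_log one_ne_zero).tendsto.comp h').const_mul c

def phiPrimitive (a ε p m τ : ℝ) : ℝ :=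
  a * log (a + τ) + ε * log (ε + τ) - p * log (p + τ) - m * log (m + τ)

section phiPrimitive

variable {a ε x p m : ℝ}

lemma continuousWithinAt_phiPrimitive (ha : 0 ≤ a) (hε : 0 ≤ ε) (hp : 0 ≤ p) (hm : 0 ≤ m) :
    ContinuousWithinAt (phiPrimitive a ε p m) (Ici 0) 0 :=
  (((continuousWithinAt_mul_log_add ha).add (continuousWithinAt_mul_log_add hε)).sub
    (continuousWithinAt_mul_log_add hp)).sub (continuousWithinAt_mul_log_add hm)

lemma tendsto_phiPrimitive_atTop (ha : 0 ≤ a) (hε : 0 ≤ ε) (hp : 0 ≤ p) (hm : 0 ≤ m)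
    (hsum : p + m = a + ε) :
    Tendsto (phiPrimitive a ε p m) atTop (𝓝 0) := by
  have h := (((tendsto_mul_log_add_div_atTop a).add (tendsto_mul_log_add_div_atTop ε)).sub
    (tendsto_mul_log_add_div_atTop p)).sub (tendsto_mul_log_add_div_atTop m)
  simp only [add_zero, sub_zero] at h
  refine h.congr' ?_
  filter_upwards [eventually_gt_atTop 0] with τ hτ
  have hlog (c : ℝ) (hc : 0 < c + τ) : log ((c + τ) / τ) = log (c + τ) - log τ :=
    log_div hc.ne' hτ.ne'
  rw [phiPrimitive, hlog a (by positivity), hlog ε (by positivity), hlog p (by positivity),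
    hlog m (by positivity)]
  linear_combination log τ * hsum

lemma hasDerivAt_phiPrimitive (ha : 0 ≤ a) (hε : 0 ≤ ε) (hp : 0 ≤ p) (hm : 0 ≤ m)
    (hsum : p + m = a + ε) (hprod : p * m = a * ε - x) {τ : ℝ} (hτ : 0 < τ) :
    HasDerivAt (phiPrimitive a ε p m) (phiIntegrand a ε x τ) τ := by
  have hlog {c : ℝ} (hc : 0 ≤ c) : HasDerivAt (fun τ ↦ c * log (c + τ)) (c / (c + τ)) τ := by
    simpa [div_eq_mul_inv] using (((hasDerivAt_id τ).const_add c).log (by positivity)).const_mul c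
  refine ((((hlog ha).add (hlog hε)).sub (hlog hp)).sub (hlog hm)).congr_deriv ?_
  have hpm : (a + τ) * (ε + τ) - x = (p + τ) * (m + τ) := by linear_combination -hprod - τ * hsum
  unfold phiIntegrand
  rw [hpm]
  field_simp
  linear_combination τ * (a * ε - τ ^ 2) * hsum - τ * (a + ε + 2 * τ) * hprod

end phiPrimitive

section integral

variable {a ε x : ℝ}

lemma exists_phiPrimitive_zero_eq_neg_Phi (ha : 0 ≤ a) (hε : 0 ≤ ε) (hx₀ : 0 ≤ x)
    (hx : x ≤ a * ε) :
    ∃ p m, 0 ≤ p ∧ 0 ≤ m ∧ p + m = a + ε ∧ p * m = a * ε - x ∧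
      phiPrimitive a ε p m 0 = -Phi a ε x := by
  set s := √((a - ε) ^ 2 + 4 * x) with hs
  have hs_sq : s ^ 2 = (a - ε) ^ 2 + 4 * x := sq_sqrt (by positivity)
  have hs_le : s ≤ a + ε := by
    rw [hs, sqrt_le_left (by positivity)]
    nlinarith
  refine ⟨(a + ε + s) / 2, (a + ε - s) / 2, by positivity, by linarith, by ring, ?_, ?_⟩
  · linear_combination -hs_sq / 4
  · simp only [phiPrimitive, Phi, add_zero]
    ring

lemma integrableOn_phiIntegrand (ha : 0 ≤ a) (hε : 0 ≤ ε) (hx₀ : 0 ≤ x) (hx : x ≤ a * ε) :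
    IntegrableOn (phiIntegrand a ε x) (Ioi 0) := by
  obtain ⟨p, m, hp, hm, hsum, hprod, -⟩ := exists_phiPrimitive_zero_eq_neg_Phi ha hε hx₀ hx
  exact integrableOn_Ioi_deriv_of_nonneg (continuousWithinAt_phiPrimitive ha hε hp hm)
    (fun τ hτ ↦ hasDerivAt_phiPrimitive ha hε hp hm hsum hprod hτ)
    (fun τ hτ ↦ phiIntegrand_nonneg ha hε hx₀ hx (le_of_lt hτ))
    (tendsto_phiPrimitive_atTop ha hε hp hm hsum)

lemma integral_phiIntegrand (ha : 0 ≤ a) (hε : 0 ≤ ε) (hx₀ : 0 ≤ x) (hx : x ≤ a * ε) :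
    ∫ t in Ioi 0, phiIntegrand a ε x t = Phi a ε x := by
  obtain ⟨p, m, hp, hm, hsum, hprod, hPhi⟩ := exists_phiPrimitive_zero_eq_neg_Phi ha hε hx₀ hx
  rw [integral_Ioi_of_hasDerivAt_of_tendsto (continuousWithinAt_phiPrimitive ha hε hp hm)
    (fun τ hτ ↦ hasDerivAt_phiPrimitive ha hε hp hm hsum hprod hτ)
    (integrableOn_phiIntegrand ha hε hx₀ hx) (tendsto_phiPrimitive_atTop ha hε hp hm hsum), hPhi,
    zero_sub, neg_neg]

end integral

lemma phiIntegrand_merge_le {ι : Type*} (s : Finset ι) {a₀ δ t : ℝ} {u ε x : ι → ℝ}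
    (ha₀ : 0 ≤ a₀) (hu : ∀ i ∈ s, 0 ≤ u i) (hε : ∀ i ∈ s, 0 ≤ ε i) (hδ : 0 ≤ δ)
    (hx₀ : ∀ i ∈ s, 0 ≤ x i) (hxu : ∀ i ∈ s, x i ≤ (a₀ + u i) * ε i) (ht : 0 < t) :
    phiIntegrand (a₀ + ∑ i ∈ s, u i) (δ + ∑ i ∈ s, ε i) (∑ i ∈ s, x i) t ≤
      ∑ i ∈ s, phiIntegrand (a₀ + u i) (ε i) (x i) t := by
  set A := a₀ + ∑ i ∈ s, u i
  have hA : 0 ≤ A := add_nonneg ha₀ (Finset.sum_nonneg hu)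
  have hle : ∀ i ∈ s, a₀ + u i ≤ A := fun i hi ↦ add_le_add_right (Finset.single_le_sum hu hi) a₀
  have hxA : ∀ i ∈ s, x i ≤ A * ε i := fun i hi ↦
    (hxu i hi).trans (mul_le_mul_of_nonneg_right (hle i hi) (hε i hi))
  have hsum : ∑ i ∈ s, x i ≤ A * ∑ i ∈ s, ε i := Finset.mul_sum s ε A ▸ Finset.sum_le_sum hxA
  calc phiIntegrand A (δ + ∑ i ∈ s, ε i) (∑ i ∈ s, x i) t
      ≤ phiIntegrand A (∑ i ∈ s, ε i) (∑ i ∈ s, x i) t :=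
        phiIntegrand_add_left_le hA (Finset.sum_nonneg hε) hδ (Finset.sum_nonneg hx₀) hsum ht
    _ ≤ ∑ i ∈ s, phiIntegrand A (ε i) (x i) t := phiIntegrand_sum_le s hA hε hx₀ hxA ht
    _ ≤ ∑ i ∈ s, phiIntegrand (a₀ + u i) (ε i) (x i) t := Finset.sum_le_sum fun i hi ↦
        phiIntegrand_le_of_le_left (ha₀.trans (le_add_of_nonneg_right (hu i hi))) (hle i hi) (hε i hi)
          (hx₀ i hi) (hxu i hi) ht

/-- Floor-aware merging: with `a_j = a₀ + u_j`, `A = a₀ + Σ u_j`,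
`E = ε_rem + Σ ε_j`, `X = Σ x_j ≤ A·E`, one has
`Σ_j Φ(a_j, ε_j, x_j) ≥ Φ(A, E, X)`. -/
theorem Phi_merging (n : ℕ) (a₀ : ℝ) (ha₀ : 0 < a₀)
    (u ε x : Fin n → ℝ) (εrem : ℝ)
    (hu : ∀ j, 0 ≤ u j) (hε : ∀ j, 0 ≤ ε j) (hεrem : 0 ≤ εrem)
    (hx : ∀ j, 0 ≤ x j) (hxu : ∀ j, x j ≤ (a₀ + u j) * ε j)
    (hX : ∑ j, x j ≤ (a₀ + ∑ j, u j) * (εrem + ∑ j, ε j)) :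
    ∑ j, Phi (a₀ + u j) (ε j) (x j) ≥
      Phi (a₀ + ∑ j, u j) (εrem + ∑ j, ε j) (∑ j, x j) := by
  have ha : ∀ j, 0 ≤ a₀ + u j := fun j ↦ add_nonneg ha₀.le (hu j)
  have hA : 0 ≤ a₀ + ∑ j, u j := add_nonneg ha₀.le (Finset.sum_nonneg fun j _ ↦ hu j)
  have hE : 0 ≤ εrem + ∑ j, ε j := add_nonneg hεrem (Finset.sum_nonneg fun j _ ↦ hε j)
  have hX₀ : 0 ≤ ∑ j, x j := Finset.sum_nonneg fun j _ ↦ hx j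
  have hint : ∀ j, IntegrableOn (phiIntegrand (a₀ + u j) (ε j) (x j)) (Ioi 0) := fun j ↦
    integrableOn_phiIntegrand (ha j) (hε j) (hx j) (hxu j)
  calc Phi (a₀ + ∑ j, u j) (εrem + ∑ j, ε j) (∑ j, x j)
      = ∫ t in Ioi 0, phiIntegrand (a₀ + ∑ j, u j) (εrem + ∑ j, ε j) (∑ j, x j) t :=
        (integral_phiIntegrand hA hE hX₀ hX).symm
    _ ≤ ∫ t in Ioi 0, ∑ j, phiIntegrand (a₀ + u j) (ε j) (x j) t :=
        setIntegral_mono_on (integrableOn_phiIntegrand hA hE hX₀ hX)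
          (integrable_finsetSum _ fun j _ ↦ hint j) measurableSet_Ioi fun t ht ↦
          phiIntegrand_merge_le _ ha₀.le (fun j _ ↦ hu j) (fun j _ ↦ hε j) hεrem (fun j _ ↦ hx j)
            (fun j _ ↦ hxu j) ht
    _ = ∑ j, Phi (a₀ + u j) (ε j) (x j) := by
        rw [integral_finsetSum _ fun j _ ↦ hint j]
        exact Finset.sum_congr rfl fun j _ ↦ integral_phiIntegrand (ha j) (hε j) (hx j) (hxu j)
end
end

section
/- Fix d_P, d_Q ≥ 1, a₀ > 0, ε > 0, c ≥ 0, and φ ∈ ℝ with 1 − ε ≥ d_P·a₀ and c ≤ a*·ε, where a* := 1 − ε − (d_P − 1)a₀. Let p_1, …, p_{d_P} be the standard basis of ℂ^{d_P} and q_1 the first standard basis vector of ℂ^{d_Q}, and define the matrix ρ on ℂ^{d_P+d_Q} whose only nonzero entries are: ⟨p_1, ρ p_1⟩ = a*, ⟨q_1, ρ q_1⟩ = ε, ⟨p_1, ρ q_1⟩ = √c·e^{iφ}, ⟨q_1, ρ p_1⟩ = √c·e^{−iφ}, and ⟨p_k, ρ p_k⟩ = a₀ for k = 2, …, d_P. Then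 ρ is a density matrix with A ≥ a₀I, Tr(C) = ε, ‖B‖_F² = c, and D(ρ‖Πρ) = Φ(a*, ε, c). -/
/-!
The state `ρ` is diagonal except for the coupling `√c e^{iφ}` between `p₁` and `q₁`. Splitting
off the two-dimensional block on `span {p₁, q₁}`, its characteristic polynomial is
`((X - a*)(X - ε) - c) · ∏ (X - ρₖₖ)` over the remaining indices, so the spectrum of `ρ` is
`λ₊, λ₋` together with the other diagonal entries. The pinching `Πρ` is the diagonal part of `ρ`,
so `log Πρ` is diagonal and `Tr ρ log Πρ = ∑ ρₖₖ log ρₖₖ`. In `D(ρ‖Πρ)` all terms outside the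
block cancel, leaving `λ₊ log λ₊ + λ₋ log λ₋ - a* log a* - ε log ε = Φ(a*, ε, c)`.
-/

open Matrix MeasureTheory
open scoped ComplexOrder

noncomputable section

section

open Polynomial

-- `λ₊` and `λ₋`: the eigenvalues of a Hermitian `2 × 2` matrix with diagonal `(a, ε)` whose
-- off-diagonal entry has squared modulus `x`.
def eigPlus (a ε x : ℝ) : ℝ := (a + ε + √((a - ε) ^ 2 + 4 * x)) / 2

def eigMinus (a ε x : ℝ) : ℝ := (a + ε - √((a - ε) ^ 2 + 4 * x)) / 2

theorem Phi_eq (a ε x : ℝ) :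
    Phi a ε x = eigPlus a ε x * Real.log (eigPlus a ε x) +
      eigMinus a ε x * Real.log (eigMinus a ε x) - a * Real.log a - ε * Real.log ε := rfl

theorem eigPlus_add_eigMinus (a ε x : ℝ) : eigPlus a ε x + eigMinus a ε x = a + ε := by
  unfold eigPlus eigMinus; ring

theorem eigPlus_mul_eigMinus {a ε x : ℝ} (hx : 0 ≤ x) :
    eigPlus a ε x * eigMinus a ε x = a * ε - x := by
  have hs := Real.sq_sqrt (show 0 ≤ (a - ε) ^ 2 + 4 * x by positivity)
  unfold eigPlus eigMinus
  linear_combination (-1 / 4 : ℝ) * hs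

theorem eigMinus_nonneg {a ε x : ℝ} (ha : 0 ≤ a) (hε : 0 ≤ ε) (hx : 0 ≤ x) (hxa : x ≤ a * ε) :
    0 ≤ eigMinus a ε x := by
  have hs := Real.sq_sqrt (show 0 ≤ (a - ε) ^ 2 + 4 * x by positivity)
  have : √((a - ε) ^ 2 + 4 * x) ≤ a + ε := by
    nlinarith [Real.sqrt_nonneg ((a - ε) ^ 2 + 4 * x)]
  unfold eigMinus; linarith

theorem eigPlus_nonneg {a ε x : ℝ} (ha : 0 ≤ a) (hε : 0 ≤ ε) : 0 ≤ eigPlus a ε x := by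
  unfold eigPlus; positivity

theorem quadratic_eq_X_sub_eigPlus_mul_X_sub_eigMinus {a ε x : ℝ} (hx : 0 ≤ x) :
    (X - C (a : ℂ)) * (X - C (ε : ℂ)) - C (x : ℂ) =
      (X - C (eigPlus a ε x : ℂ)) * (X - C (eigMinus a ε x : ℂ)) := by
  have hsum : C (eigPlus a ε x : ℂ) + C (eigMinus a ε x : ℂ) = C (a : ℂ) + C (ε : ℂ) := by
    rw [← map_add, ← Complex.ofReal_add, eigPlus_add_eigMinus, Complex.ofReal_add, map_add]
  have hprod : C (eigPlus a ε x : ℂ) * C (eigMinus a ε x : ℂ) =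
      C (a : ℂ) * C (ε : ℂ) - C (x : ℂ) := by
    rw [← map_mul, ← Complex.ofReal_mul, eigPlus_mul_eigMinus hx, Complex.ofReal_sub,
      Complex.ofReal_mul, map_sub, map_mul]
  linear_combination X * hsum - hprod

theorem Complex.normSq_ofReal_sqrt_mul_exp_mul_I {c : ℝ} (hc : 0 ≤ c) (φ : ℝ) :
    Complex.normSq ((√c : ℂ) * Complex.exp (φ * Complex.I)) = c := by
  rw [Complex.normSq_mul, Complex.normSq_ofReal, Complex.normSq_eq_norm_sq (Complex.exp _),
    Complex.norm_exp_ofReal_mul_I, Real.mul_self_sqrt hc, one_pow, mul_one]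

theorem Fintype.sum_ite_eq_add_card_sub_one_mul {ι R : Type*} [Fintype ι] [DecidableEq ι]
    [CommRing R] (i₀ : ι) (x y : R) :
    ∑ i, (if i = i₀ then x else y) = x + ((Fintype.card ι : R) - 1) * y := by
  rw [← Finset.add_sum_erase _ _ (Finset.mem_univ i₀), if_pos rfl,
    Finset.sum_congr rfl fun i hi => if_neg (Finset.ne_of_mem_erase hi), Finset.sum_const,
    Finset.card_erase_of_mem (Finset.mem_univ _), Finset.card_univ, nsmul_eq_mul,
    Nat.cast_sub (Fintype.card_pos_iff.mpr ⟨i₀⟩), Nat.cast_one]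

namespace Matrix

variable {n : Type*} [Fintype n] [DecidableEq n]

theorem charpoly_eq_mul_of_twoBlockTriangular {R : Type*} [CommRing R] (M : Matrix n n R)
    (P : n → Prop) [DecidablePred P] (h : ∀ i, ¬P i → ∀ j, P j → M i j = 0) :
    M.charpoly = (M.toSquareBlockProp P).charpoly * (M.toSquareBlockProp (¬P ·)).charpoly := by
  have hblock (Q : n → Prop) [DecidablePred Q] :
      (M.toSquareBlockProp Q).charmatrix = M.charmatrix.toSquareBlockProp Q := by
    ext i j
    simp [charmatrix_apply, toSquareBlockProp_def, diagonal_apply, Subtype.ext_iff]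
  rw [charpoly, twoBlockTriangular_det _ P, ← hblock, ← hblock]
  · rfl
  intro i hi j hj
  have hij : i ≠ j := fun e => hi (e ▸ hj)
  simp [charmatrix_apply_ne _ _ _ hij, h i hi j hj]

theorem det_eq_of_forall_eq_or_eq {R : Type*} [CommRing R] {p q : n} (hpq : p ≠ q)
    (hn : ∀ i, i = p ∨ i = q) (M : Matrix n n R) :
    M.det = M p p * M q q - M p q * M q p := by
  let e : Fin 2 ≃ n :=
    { toFun := ![p, q]
      invFun := fun i => if i = p then 0 else 1
      left_inv := fun i => by fin_cases i <;> simp [hpq.symm]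
      right_inv := fun i => by rcases hn i with rfl | rfl <;> simp [hpq.symm] }
  rw [← det_submatrix_equiv_self e, det_fin_two]
  rfl

theorem IsHermitian.map_eigenvalues_eq_of_charpoly_eq_prod {𝕜 : Type*} [RCLike 𝕜]
    {A : Matrix n n 𝕜} (hA : A.IsHermitian) {ι : Type*} [Fintype ι] (μ : ι → ℝ)
    (h : A.charpoly = ∏ j, (X - C (μ j : 𝕜))) :
    Finset.univ.val.map hA.eigenvalues = Finset.univ.val.map μ := by
  have hroots := hA.roots_charpoly_eq_eigenvalues
  rw [h, roots_prod _ _ (Finset.prod_ne_zero_iff.mpr fun j _ => X_sub_C_ne_zero _)] at hroots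
  simp only [roots_X_sub_C, Multiset.bind_singleton] at hroots
  apply Multiset.map_injective (RCLike.ofReal_injective (K := 𝕜))
  rw [Multiset.map_map, Multiset.map_map]
  exact hroots.symm

theorem trace_mul_mlog {A : Matrix n n ℂ} (hA : A.IsHermitian) :
    (A * mlog A).trace = ∑ i, ((hA.eigenvalues i * Real.log (hA.eigenvalues i) : ℝ) : ℂ) := by
  set U : Matrix n n ℂ := ↑hA.eigenvectorUnitary
  have hU : Uᴴ * U = 1 := by
    rw [← star_eq_conjTranspose]; exact Unitary.star_mul_self_of_mem hA.eigenvectorUnitary.2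
  have hA' : A = U * diagonal (fun i => (hA.eigenvalues i : ℂ)) * Uᴴ := by
    conv_lhs => rw [hA.spectral_theorem]
    rfl
  rw [mlog, dif_pos hA]
  nth_rewrite 1 [hA']
  calc (U * diagonal (fun i => (hA.eigenvalues i : ℂ)) * Uᴴ *
        (U * diagonal (fun i => (Real.log (hA.eigenvalues i) : ℂ)) * Uᴴ)).trace
      = (U * (diagonal (fun i => (hA.eigenvalues i : ℂ)) * (Uᴴ * U) *
        diagonal (fun i => (Real.log (hA.eigenvalues i) : ℂ))) * Uᴴ).trace := by
        simp only [Matrix.mul_assoc]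
    _ = _ := by
        rw [trace_mul_cycle, ← Matrix.mul_assoc, hU, Matrix.one_mul, Matrix.mul_one,
          diagonal_mul_diagonal, trace_diagonal]
        push_cast; rfl

theorem IsHermitian.sum_eigenvalues_eq_of_charpoly_eq_prod {𝕜 M : Type*} [RCLike 𝕜]
    [AddCommMonoid M] {A : Matrix n n 𝕜} (hA : A.IsHermitian) {ι : Type*} [Fintype ι]
    (μ : ι → ℝ) (h : A.charpoly = ∏ j, (X - C (μ j : 𝕜))) (g : ℝ → M) :
    ∑ i, g (hA.eigenvalues i) = ∑ j, g (μ j) := by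
  simpa only [Multiset.map_map, Function.comp_def, ← Finset.sum_eq_multiset_sum] using
    congrArg (fun s => (s.map g).sum) (hA.map_eigenvalues_eq_of_charpoly_eq_prod μ h)

theorem IsHermitian.posSemidef_of_charpoly_eq_prod {𝕜 : Type*} [RCLike 𝕜]
    {A : Matrix n n 𝕜} (hA : A.IsHermitian) {ι : Type*} [Fintype ι]
    (μ : ι → ℝ) (h : A.charpoly = ∏ j, (X - C (μ j : 𝕜))) (hμ : ∀ j, 0 ≤ μ j) :
    A.PosSemidef := by
  refine hA.posSemidef_iff_eigenvalues_nonneg.mpr fun i => ?_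
  have hi : hA.eigenvalues i ∈ Finset.univ.val.map μ := by
    rw [← hA.map_eigenvalues_eq_of_charpoly_eq_prod μ h]
    exact Multiset.mem_map_of_mem _ (Finset.mem_univ i)
  obtain ⟨j, -, hj⟩ := Multiset.mem_map.mp hi
  exact hj ▸ hμ j

theorem diagonal_comp_mul_eq_mul_diagonal_comp {m R : Type*} [Fintype m] [DecidableEq m]
    [CommRing R] [NoZeroDivisors R] {d : m → R} {e : n → R} {X : Matrix m n R}
    (h : diagonal d * X = X * diagonal e) (f : R → R) :
    diagonal (f ∘ d) * X = X * diagonal (f ∘ e) := by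
  ext i j
  have hij := congr_fun₂ h i j
  simp only [diagonal_mul, mul_diagonal, Function.comp_apply] at hij ⊢
  rcases eq_or_ne (X i j) 0 with hX | hX
  · simp [hX]
  · have hde : X i j * d i = X i j * e j := by rw [mul_comm, hij]
    rw [mul_left_cancel₀ hX hde, mul_comm]

theorem mlog_diagonal (d : n → ℝ) :
    mlog (diagonal fun i => (d i : ℂ)) = diagonal fun i => (Real.log (d i) : ℂ) := by
  have hD : (diagonal fun i => (d i : ℂ)).IsHermitian := by
    simp [IsHermitian, diagonal_conjTranspose]
  set U : Matrix n n ℂ := ↑hD.eigenvectorUnitary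
  have hU : Uᴴ * U = 1 := by
    rw [← star_eq_conjTranspose]; exact Unitary.star_mul_self_of_mem hD.eigenvectorUnitary.2
  have hU' : U * Uᴴ = 1 := mul_eq_one_comm.mp hU
  have hspec : diagonal (fun i => (d i : ℂ)) =
      U * diagonal (fun i => (hD.eigenvalues i : ℂ)) * Uᴴ := by
    conv_lhs => rw [hD.spectral_theorem]
    rfl
  have hcomm : diagonal (fun i => (hD.eigenvalues i : ℂ)) * Uᴴ =
      Uᴴ * diagonal (fun i => (d i : ℂ)) := by
    calc _ = Uᴴ * (U * diagonal (fun i => (hD.eigenvalues i : ℂ)) * Uᴴ) := by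
          simp only [← Matrix.mul_assoc, hU, Matrix.one_mul]
      _ = _ := by rw [← hspec]
  -- `Uᴴ` intertwines the two diagonalizations, hence also their logarithms.
  have hlog := diagonal_comp_mul_eq_mul_diagonal_comp hcomm fun z => (Real.log z.re : ℂ)
  simp only [Function.comp_def, Complex.ofReal_re] at hlog
  rw [mlog, dif_pos hD, Matrix.mul_assoc, hlog, ← Matrix.mul_assoc, hU', Matrix.one_mul]

omit [Fintype n] in
theorem posSemidef_diagonal_sub_smul_one {r : ℝ} {α : n → ℝ} (h : ∀ i, r ≤ α i) :
    (diagonal (fun i => (α i : ℂ)) - r • 1).PosSemidef := by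
  have hdiag : diagonal (fun i => (α i : ℂ)) - r • 1 = diagonal fun i => ((α i - r : ℝ) : ℂ) := by
    ext i j
    rcases eq_or_ne i j with rfl | hij
    · simp [Complex.real_smul]
    · simp [hij]
  rw [hdiag, posSemidef_diagonal_iff]
  exact fun i => Complex.zero_le_real.mpr (sub_nonneg.mpr (h i))

theorem trace_conjTranspose_single_mul_single {m : Type*} [Fintype m] [DecidableEq m]
    (i : n) (j : m) (z : ℂ) : ((single i j z)ᴴ * single i j z).trace = Complex.normSq z := by
  rw [conjTranspose_single, single_mul_single_same, trace_single_eq_same,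
    Complex.normSq_eq_conj_mul_self]
  rfl

section TwoLevel

variable (d : n → ℝ) {p q : n} (z : ℂ)

def twoLevel (p q : n) : Matrix n n ℂ :=
  diagonal (fun i => (d i : ℂ)) + single p q z + single q p (star z)

def twoLevelSpectrum (p q : n) (k : n) : ℝ :=
  if k = p then eigPlus (d p) (d q) (Complex.normSq z)
  else if k = q then eigMinus (d p) (d q) (Complex.normSq z) else d k

omit [Fintype n] in
theorem twoLevel_apply (i j : n) : twoLevel d z p q i j =
    (if i = j then (d i : ℂ) else 0) + (if p = i ∧ q = j then z else 0) +
      (if q = i ∧ p = j then star z else 0) := by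
  simp [twoLevel, diagonal_apply, single_apply]

omit [Fintype n] in
theorem twoLevel_apply_self (hpq : p ≠ q) (k : n) : twoLevel d z p q k k = d k := by
  have h : ¬(p = k ∧ q = k) := fun h => hpq (h.1.trans h.2.symm)
  rw [twoLevel_apply, if_pos rfl, if_neg h, if_neg fun h' => h ⟨h'.2, h'.1⟩, add_zero, add_zero]

omit [Fintype n] in
theorem isHermitian_twoLevel (p q : n) : (twoLevel d z p q).IsHermitian := by
  have hd : star (fun i => (d i : ℂ)) = fun i => (d i : ℂ) :=
    funext fun i => Complex.conj_ofReal (d i)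
  simp only [IsHermitian, twoLevel, conjTranspose_add, diagonal_conjTranspose,
    conjTranspose_single, star_star, hd]
  exact add_right_comm _ _ _

omit [Fintype n] in
theorem fromBlocks_eq_twoLevel {m : Type*} [DecidableEq m] (α : n → ℝ) (γ : m → ℝ) (i₀ : n)
    (j₀ : m) : fromBlocks (diagonal fun i => (α i : ℂ)) (single i₀ j₀ z) (single i₀ j₀ z)ᴴ
      (diagonal fun j => (γ j : ℂ)) = twoLevel (Sum.elim α γ) z (.inl i₀) (.inr j₀) := by
  ext (i | i) (j | j) <;> simp [twoLevel_apply, diagonal_apply, single_apply, conjTranspose_single]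

theorem trace_twoLevel (hpq : p ≠ q) : (twoLevel d z p q).trace = ((∑ k, d k : ℝ) : ℂ) := by
  rw [trace, Complex.ofReal_sum]
  exact Finset.sum_congr rfl fun k _ => twoLevel_apply_self d z hpq k

theorem charpoly_twoLevel (hpq : p ≠ q) :
    (twoLevel d z p q).charpoly = ∏ k, (X - C (twoLevelSpectrum d z p q k : ℂ)) := by
  set P : n → Prop := fun k => k = p ∨ k = q
  have hcorner : ∀ i, ¬P i → ∀ j, P j → twoLevel d z p q i j = 0 := by
    rintro i hi j (rfl | rfl) <;> simp only [P, not_or] at hi <;>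
      simp [twoLevel_apply, hi.1, hi.2, Ne.symm hi.1, Ne.symm hi.2]
  rw [charpoly_eq_mul_of_twoBlockTriangular _ P hcorner,
    ← Fintype.prod_subtype_mul_prod_subtype P]
  congr 1
  · let p' : {k // P k} := ⟨p, .inl rfl⟩
    let q' : {k // P k} := ⟨q, .inr rfl⟩
    have hpq' : p' ≠ q' := fun h => hpq (congrArg Subtype.val h)
    have hP : ∀ k, k = p' ∨ k = q' := by
      rintro ⟨k, rfl | rfl⟩
      · exact .inl rfl
      · exact .inr rfl
    have hcard : Fintype.card {k // P k} = 2 := by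
      rw [Fintype.card_subtype, Finset.filter_or, Finset.filter_eq', Finset.filter_eq',
        if_pos (Finset.mem_univ _), if_pos (Finset.mem_univ _)]
      exact Finset.card_pair hpq
    rw [charpoly_of_card_eq_two _ hcard, det_eq_of_forall_eq_or_eq hpq' hP, trace,
      Fintype.sum_eq_add p' q' hpq' (fun k hk => absurd (hP k) (not_or.mpr hk)),
      Fintype.prod_eq_mul p' q' hpq' (fun k hk => absurd (hP k) (not_or.mpr hk))]
    simp only [toSquareBlockProp_def, twoLevel_apply, RCLike.star_def, diag_apply, of_apply,
      ↓reduceIte, hpq, hpq.symm, and_false, add_zero, and_true, map_add, and_self, zero_add,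
      map_sub, map_mul, twoLevelSpectrum, p', q']
    rw [← quadratic_eq_X_sub_eigPlus_mul_X_sub_eigMinus (Complex.normSq_nonneg z),
      ← Complex.mul_conj, map_mul]
    ring
  · have hdiag : (twoLevel d z p q).toSquareBlockProp (¬P ·) =
        diagonal fun k : {k // ¬P k} => (d k : ℂ) := by
      ext ⟨i, hi⟩ ⟨j, hj⟩
      simp only [P, not_or] at hi hj
      simp [toSquareBlockProp_def, twoLevel_apply, diagonal_apply, Subtype.ext_iff, Ne.symm hi.1,
        Ne.symm hi.2]
    rw [hdiag, charpoly_diagonal]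
    refine Finset.prod_congr rfl fun ⟨k, hk⟩ _ => ?_
    simp only [P, not_or] at hk
    simp [twoLevelSpectrum, hk.1, hk.2]

theorem relEnt_twoLevel (hpq : p ≠ q) :
    relEnt (twoLevel d z p q) (diagonal fun k => (d k : ℂ)) =
      Phi (d p) (d q) (Complex.normSq z) := by
  have hH := isHermitian_twoLevel d z p q
  have hself : (twoLevel d z p q * mlog (twoLevel d z p q)).trace =
      ((∑ k, twoLevelSpectrum d z p q k * Real.log (twoLevelSpectrum d z p q k) : ℝ) : ℂ) := by
    rw [trace_mul_mlog hH, hH.sum_eigenvalues_eq_of_charpoly_eq_prod (twoLevelSpectrum d z p q)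
      (charpoly_twoLevel d z hpq)
      fun t => ((t * Real.log t : ℝ) : ℂ), Complex.ofReal_sum]
  have hcross : (twoLevel d z p q * mlog (diagonal fun k => (d k : ℂ))).trace =
      ((∑ k, d k * Real.log (d k) : ℝ) : ℂ) := by
    rw [mlog_diagonal, trace, Complex.ofReal_sum]
    refine Finset.sum_congr rfl fun k _ => ?_
    rw [diag_apply, mul_diagonal, twoLevel_apply_self d z hpq, Complex.ofReal_mul]
  rw [relEnt, Matrix.mul_sub, trace_sub, hself, hcross, ← Complex.ofReal_sub, Complex.ofReal_re,
    ← Finset.sum_sub_distrib, Fintype.sum_eq_add p q hpq, Phi_eq]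
  · simp only [twoLevelSpectrum, ↓reduceIte, hpq.symm]
    ring
  · rintro k ⟨hkp, hkq⟩
    simp [twoLevelSpectrum, hkp, hkq]

theorem posSemidef_twoLevel (hpq : p ≠ q) (hd : ∀ k, 0 ≤ d k)
    (hz : Complex.normSq z ≤ d p * d q) : (twoLevel d z p q).PosSemidef := by
  refine (isHermitian_twoLevel d z p q).posSemidef_of_charpoly_eq_prod
    (twoLevelSpectrum d z p q) (charpoly_twoLevel d z hpq) fun k => ?_
  unfold twoLevelSpectrum
  split_ifs
  · exact eigPlus_nonneg (hd p) (hd q)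
  · exact eigMinus_nonneg (hd p) (hd q) (Complex.normSq_nonneg z) hz
  · exact hd k

theorem posSemidef_fromBlocks_single {m : Type*} [Fintype m] [DecidableEq m] {α : n → ℝ}
    {γ : m → ℝ} (hα : ∀ i, 0 ≤ α i) (hγ : ∀ j, 0 ≤ γ j) {i₀ : n} {j₀ : m}
    (hz : Complex.normSq z ≤ α i₀ * γ j₀) :
    (fromBlocks (diagonal fun i => (α i : ℂ)) (single i₀ j₀ z) (single i₀ j₀ z)ᴴ
      (diagonal fun j => (γ j : ℂ))).PosSemidef := by
  rw [fromBlocks_eq_twoLevel]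
  exact posSemidef_twoLevel _ z Sum.inl_ne_inr (Sum.forall.mpr ⟨hα, hγ⟩) hz

theorem relEnt_fromBlocks_single {m : Type*} [Fintype m] [DecidableEq m] (α : n → ℝ)
    (γ : m → ℝ) (i₀ : n) (j₀ : m) :
    relEnt (fromBlocks (diagonal fun i => (α i : ℂ)) (single i₀ j₀ z) (single i₀ j₀ z)ᴴ
        (diagonal fun j => (γ j : ℂ)))
      (fromBlocks (diagonal fun i => (α i : ℂ)) 0 0 (diagonal fun j => (γ j : ℂ))) =
      Phi (α i₀) (γ j₀) (Complex.normSq z) := by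
  have hPinch : fromBlocks (diagonal fun i => (α i : ℂ)) 0 0 (diagonal fun j => (γ j : ℂ)) =
      diagonal fun k => ((Sum.elim α γ k : ℝ) : ℂ) := by
    rw [fromBlocks_diagonal]; congr 1; ext (i | j) <;> rfl
  rw [fromBlocks_eq_twoLevel, hPinch, relEnt_twoLevel _ z Sum.inl_ne_inr]
  rfl

end TwoLevel

end Matrix

end

/-- The explicit two-level optimizer: the state with `⟨p₁,ρp₁⟩ = a*`,
`⟨q₁,ρq₁⟩ = ε`, `⟨p₁,ρq₁⟩ = √c e^{iφ}`, `⟨q₁,ρp₁⟩ = √c e^{−iφ}`,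
`⟨p_k,ρp_k⟩ = a₀` (k ≥ 2) and all other entries zero is a density matrix with
`A ≥ a₀ I`, `Tr C = ε`, `‖B‖_F² = c`, and `D(ρ‖Πρ) = Φ(a*, ε, c)`. -/
theorem explicit_optimizer {dP dQ : ℕ} (hdP : 1 ≤ dP) (hdQ : 1 ≤ dQ)
    (a₀ ε c φ : ℝ) (ha₀ : 0 < a₀) (hε : 0 < ε) (hc : 0 ≤ c)
    (hcap : 1 - ε ≥ (dP : ℝ) * a₀)
    (hcpos : c ≤ (1 - ε - ((dP : ℝ) - 1) * a₀) * ε)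
    (A : Matrix (Fin dP) (Fin dP) ℂ)
    (hA : A = Matrix.diagonal (fun i : Fin dP =>
      if i = (⟨0, hdP⟩ : Fin dP)
        then ((1 - ε - ((dP : ℝ) - 1) * a₀ : ℝ) : ℂ) else ((a₀ : ℝ) : ℂ)))
    (C : Matrix (Fin dQ) (Fin dQ) ℂ)
    (hC : C = Matrix.diagonal (fun j : Fin dQ =>
      if j = (⟨0, hdQ⟩ : Fin dQ) then ((ε : ℝ) : ℂ) else 0))
    (B : Matrix (Fin dP) (Fin dQ) ℂ)
    (hB : B = Matrix.of fun (i : Fin dP) (j : Fin dQ) =>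
      if i = (⟨0, hdP⟩ : Fin dP) ∧ j = (⟨0, hdQ⟩ : Fin dQ)
        then ((Real.sqrt c : ℝ) : ℂ) * Complex.exp ((φ : ℂ) * Complex.I) else 0)
    (ρ : Matrix (Fin dP ⊕ Fin dQ) (Fin dP ⊕ Fin dQ) ℂ)
    (hρ : ρ = fromBlocks A B Bᴴ C) :
    ρ.PosSemidef ∧ ρ.trace = 1 ∧
      (A - a₀ • 1).PosSemidef ∧ C.trace = (ε : ℂ) ∧ (Bᴴ * B).trace = (c : ℂ) ∧
      relEnt ρ (fromBlocks A 0 0 C) = Phi (1 - ε - ((dP : ℝ) - 1) * a₀) ε c := by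
  set i0 : Fin dP := ⟨0, hdP⟩
  set j0 : Fin dQ := ⟨0, hdQ⟩
  set a := 1 - ε - ((dP : ℝ) - 1) * a₀ with ha
  set z : ℂ := ((Real.sqrt c : ℝ) : ℂ) * Complex.exp ((φ : ℂ) * Complex.I)
  set α : Fin dP → ℝ := fun i => if i = i0 then a else a₀
  set γ : Fin dQ → ℝ := fun j => if j = j0 then ε else 0
  have hA' : A = diagonal fun i => (α i : ℂ) := by
    rw [hA]; simp only [α, apply_ite Complex.ofReal]
  have hC' : C = diagonal fun j => (γ j : ℂ) := by
    rw [hC]; simp only [γ, apply_ite Complex.ofReal, Complex.ofReal_zero]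
  have hB' : B = single i0 j0 z := by
    rw [hB]; ext i j; simp [single_apply, eq_comm]
  subst hρ hA' hC' hB'
  have hz : Complex.normSq z = c := Complex.normSq_ofReal_sqrt_mul_exp_mul_I hc φ
  have hαa₀ : ∀ i, a₀ ≤ α i := fun i => by simp only [α]; split_ifs <;> nlinarith
  have hγ0 : ∀ j, 0 ≤ γ j := fun j => by simp only [γ]; split_ifs <;> linarith
  have hα : ∑ i, α i = a + ((dP : ℝ) - 1) * a₀ := by
    rw [Fintype.sum_ite_eq_add_card_sub_one_mul, Fintype.card_fin]
  have hγ : ∑ j, γ j = ε := by simp [γ]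
  refine ⟨posSemidef_fromBlocks_single z (fun i => ha₀.le.trans (hαa₀ i)) hγ0
    (by simpa [α, γ, hz] using hcpos), ?_, posSemidef_diagonal_sub_smul_one hαa₀, ?_, ?_, ?_⟩
  · rw [fromBlocks_eq_twoLevel, trace_twoLevel _ z Sum.inl_ne_inr, Fintype.sum_sum_type]
    simp only [Sum.elim_inl, Sum.elim_inr]
    rw [hα, hγ, ha]
    push_cast
    ring
  · rw [trace_diagonal, ← Complex.ofReal_sum, hγ]
  · rw [trace_conjTranspose_single_mul_single, hz]
  · rw [relEnt_fromBlocks_single, hz]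
    simp [α, γ]
end
end
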